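/- arXiv:2509.01194 — 5 statements merged into one kernel-verified Lean document; each statement's English description precedes it below -/
import Mathlib

section
/- Let Z be a metric measure space in which every ball has positive and finite measure. Then the space LIP^∞(Z) of bounded real-valued Lipschitz functions with norm ‖f‖ = ‖f‖_{L^∞} + lip(f) is 2-isomorphic to the Hajłasz–Sobolev space M^{1,∞}(Z). Concretely: (a) every u ∈ LIP^∞(Z) satisfies that the constant function 2⁻¹ lip(u) is a Hajłasz gradient of u; and (b) every u ∈ M^{1,∞}(Z) has a representative û ∈ LIP^∞(Z) with lip(û) ≤ 2‖g‖_{L^∞(Z)} for every essentially bounded Hajłasz gradient g of u. -/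
open MeasureTheory Metric Set ENNReal NNReal

/-! Off a null set, `g ≤ ‖g‖_∞` and the Hajłasz inequality make `u` Lipschitz with constant
`2‖g‖_∞`; McShane's extension turns this into a Lipschitz function on all of `Z` that agrees
with `u` almost everywhere. When balls have positive measure, full-measure sets are dense, so a
continuous function is determined by its a.e. class: the extension does not depend on `g`, and
it satisfies everywhere the a.e. bound `|u| ≤ ‖u‖_∞`. -/

namespace MeasureTheory

lemma MemLp.ae_norm_le_eLpNorm_top_toReal {α E : Type*} [MeasurableSpace α] {μ : Measure α}
    [NormedAddCommGroup E] {f : α → E} (hf : MemLp f ∞ μ) :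
    ∀ᵐ x ∂μ, ‖f x‖ ≤ (eLpNorm f ∞ μ).toReal := by
  simpa only [toReal_eLpNorm hf.aestronglyMeasurable] using ae_le_lpNorm_exponent_top hf

lemma Measure.isOpenPosMeasure_of_measure_ball_pos {X : Type*} [PseudoMetricSpace X]
    [MeasurableSpace X] {μ : Measure X} (h : ∀ (x : X) (r : ℝ), 0 < r → 0 < μ (ball x r)) :
    μ.IsOpenPosMeasure := by
  refine ⟨fun U hU ⟨x, hx⟩ => ?_⟩
  obtain ⟨r, hr, hrU⟩ := Metric.isOpen_iff.mp hU x hx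
  exact ((h x r hr).trans_le (measure_mono hrU)).ne'

lemma _root_.Continuous.le_of_ae_le {X α : Type*} [TopologicalSpace X] [MeasurableSpace X]
    (μ : Measure X) [μ.IsOpenPosMeasure] [TopologicalSpace α] [Preorder α] [OrderClosedTopology α]
    {f : X → α} {c : α} (hf : Continuous f) (h : ∀ᵐ x ∂μ, f x ≤ c) (x : X) : f x ≤ c :=
  (μ.dense_of_ae h).induction (fun _ hx => hx) (isClosed_le hf continuous_const) x

variable {X : Type*} [PseudoMetricSpace X] [MeasurableSpace X]

def IsHajlaszGradient (μ : Measure X) (u g : X → ℝ) : Prop :=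
  ∃ N : Set X, μ N = 0 ∧ ∀ x ∉ N, ∀ y ∉ N, |u x - u y| ≤ dist x y * (g x + g y)

variable {μ : Measure X} {u g : X → ℝ}

lemma IsHajlaszGradient.exists_lipschitzWith_ae_eq {C : ℝ≥0} (hg : IsHajlaszGradient μ u g)
    (hC : ∀ᵐ x ∂μ, g x ≤ C) : ∃ v : X → ℝ, LipschitzWith (2 * C) v ∧ v =ᵐ[μ] u := by
  obtain ⟨N, hN, hgrad⟩ := hg
  set S : Set X := {x | x ∉ N ∧ g x ≤ C}
  have hS : S ∈ ae μ := (measure_eq_zero_iff_ae_notMem.mp hN).and hC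
  have hlip : LipschitzOnWith (2 * C) u S := by
    refine LipschitzOnWith.of_dist_le_mul fun x hx y hy => ?_
    calc dist (u x) (u y) = |u x - u y| := Real.dist_eq _ _
      _ ≤ dist x y * (g x + g y) := hgrad x hx.1 y hy.1
      _ ≤ dist x y * (C + C) := by gcongr; exacts [hx.2, hy.2]
      _ = (2 * C : ℝ≥0) * dist x y := by push_cast; ring
  obtain ⟨v, hv, hvu⟩ := hlip.extend_real
  exact ⟨v, hv, Filter.eventuallyEq_of_mem hS fun x hx => (hvu hx).symm⟩

lemma IsHajlaszGradient.exists_lipschitzWith_ae_eq_of_memLp (hg : IsHajlaszGradient μ u g)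
    (hg_mem : MemLp g ∞ μ) :
    ∃ v : X → ℝ, LipschitzWith (2 * (eLpNorm g ∞ μ).toNNReal) v ∧ v =ᵐ[μ] u :=
  hg.exists_lipschitzWith_ae_eq <| hg_mem.ae_norm_le_eLpNorm_top_toReal.mono fun _ hx =>
    (le_abs_self _).trans hx

end MeasureTheory

/-- In a metric measure space whose balls have positive and finite measure,
`LIP^∞(Z)` and `M^{1,∞}(Z)` are `2`-isomorphic. Concretely:
(a) for every bounded Lipschitz `u` with Lipschitz constant `K`, the constant function
`K/2` is a Hajłasz gradient of `u`; and
(b) every `u ∈ M^{1,∞}(Z)` has a bounded Lipschitz representative `uhat` with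
`lip(uhat) ≤ 2 ‖g‖_{L^∞}` for every essentially bounded Hajłasz gradient `g` of `u`. -/
theorem lip_infty_two_isomorphic_hajlasz
    {Z : Type*} [MetricSpace Z] [MeasurableSpace Z] (μ : Measure Z)
    (hballs : ∀ (z : Z) (r : ℝ), 0 < r → 0 < μ (Metric.ball z r) ∧ μ (Metric.ball z r) < ∞) :
    (∀ (u : Z → ℝ) (K : ℝ≥0), LipschitzWith K u →
      ∀ x y : Z, |u x - u y| ≤ dist x y * ((K : ℝ) / 2 + (K : ℝ) / 2)) ∧
    (∀ u : Z → ℝ, MemLp u ⊤ μ →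
      (∃ g : Z → ℝ, (∀ z, 0 ≤ g z) ∧ MemLp g ⊤ μ ∧ ∃ N : Set Z, μ N = 0 ∧
          ∀ x ∉ N, ∀ y ∉ N, |u x - u y| ≤ dist x y * (g x + g y)) →
      ∃ uhat : Z → ℝ, uhat =ᵐ[μ] u ∧ (∀ z, |uhat z| ≤ (eLpNorm u ⊤ μ).toReal) ∧
        ∀ g : Z → ℝ, (∀ z, 0 ≤ g z) → MemLp g ⊤ μ →
          (∃ N : Set Z, μ N = 0 ∧
            ∀ x ∉ N, ∀ y ∉ N, |u x - u y| ≤ dist x y * (g x + g y)) →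
          LipschitzWith (2 * (eLpNorm g ⊤ μ).toNNReal) uhat) := by
  refine ⟨fun u K hu x y => ?_, fun u hu ⟨g₀, _, hg₀, hgrad₀⟩ => ?_⟩
  · calc |u x - u y| = dist (u x) (u y) := (Real.dist_eq _ _).symm
      _ ≤ K * dist x y := hu.dist_le_mul x y
      _ = dist x y * ((K : ℝ) / 2 + (K : ℝ) / 2) := by ring
  have : μ.IsOpenPosMeasure :=
    Measure.isOpenPosMeasure_of_measure_ball_pos fun z r hr => (hballs z r hr).1
  obtain ⟨uhat, huhat, hae⟩ := IsHajlaszGradient.exists_lipschitzWith_ae_eq_of_memLp hgrad₀ hg₀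
  refine ⟨uhat, hae, huhat.continuous.abs.le_of_ae_le μ ?_, fun g _ hg hgrad => ?_⟩
  · filter_upwards [hae, hu.ae_norm_le_eLpNorm_top_toReal] with z hz hbound
    rwa [hz]
  · obtain ⟨v, hv, hvu⟩ := IsHajlaszGradient.exists_lipschitzWith_ae_eq_of_memLp hgrad hg
    rwa [(huhat.continuous.ae_eq_iff_eq μ hv.continuous).mp (hae.trans hvu.symm)]
end

section
/- Let Z be a locally complete metric measure space with an infinitesimally doubling reference measure that is finite and positive on all balls. If Z is ∞-thick (C,R)-quasiconvex, then Z is very ∞-thick (C′,R)-quasiconvex for every C′ > C. -/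
open MeasureTheory Metric Set ENNReal NNReal

/-- A rectifiable curve in arclength (unit-speed) parametrization: a `1`-Lipschitz map
on `[0, len]`. -/
structure Curve (Z : Type*) [MetricSpace Z] where
  toFun : ℝ → Z
  len : ℝ
  len_nonneg : 0 ≤ len
  lip : LipschitzOnWith 1 toFun (Set.Icc 0 len)

namespace Curve

variable {Z : Type*} [MetricSpace Z]

/-- The starting point of a curve. -/
def start (γ : Curve Z) : Z := γ.toFun 0

/-- The end point of a curve. -/
def finish (γ : Curve Z) : Z := γ.toFun γ.len

/-- The curve integral `∫_γ ρ ds`, computed in the unit-speed parametrization. -/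
noncomputable def integ (γ : Curve Z) (ρ : Z → ℝ≥0∞) : ℝ≥0∞ :=
  ∫⁻ s in Set.Icc (0 : ℝ) γ.len, ρ (γ.toFun s)

end Curve

variable {Z : Type*} [MetricSpace Z] [MeasurableSpace Z]

/-- A curve family is `∞`-negligible if some nonnegative Borel function vanishing
`μ`-a.e. has infinite curve integral over every member of the family. -/
def InfNegligible (μ : Measure Z) (Γ : Set (Curve Z)) : Prop :=
  ∃ ρ : Z → ℝ≥0∞, Measurable ρ ∧ (∀ᵐ z ∂μ, ρ z = 0) ∧ ∀ γ ∈ Γ, γ.integ ρ = ∞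

/-- The family `Γ(x, y; C)` of `C`-quasiconvex curves joining `x` to `y`. -/
def qcFam (C : ℝ) (x y : Z) : Set (Curve Z) :=
  {γ | γ.start = x ∧ γ.finish = y ∧ γ.len ≤ C * dist x y}

/-- `Z` is very `∞`-thick `(C, R)`-quasiconvex. -/
def VeryThick (μ : Measure Z) (C : ℝ) (R : ℝ≥0∞) : Prop :=
  ∀ x₀ x y : Z, edist x x₀ < R → edist y x₀ < R → ¬ InfNegligible μ (qcFam C x y)

/-- The family `Γ(E, F; C)` of curves joining `E` to `F` that are `C`-quasiconvex. -/
def thickFam (C : ℝ) (E F : Set Z) : Set (Curve Z) :=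
  {γ | γ.start ∈ E ∧ γ.finish ∈ F ∧ γ.len ≤ C * dist γ.start γ.finish}

/-- `Z` is `∞`-thick `(C, R)`-quasiconvex. -/
def ThickQC (μ : Measure Z) (C : ℝ) (R : ℝ≥0∞) : Prop :=
  ∀ x₀ : Z, ∀ E F : Set Z, MeasurableSet E → MeasurableSet F →
    E ⊆ {z | edist z x₀ < R} → F ⊆ {z | edist z x₀ < R} →
    0 < μ E → 0 < μ F → ¬ InfNegligible μ (thickFam C E F)

/-- `Z` is locally complete. -/
def LocallyComplete (Z : Type*) [MetricSpace Z] : Prop :=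
  ∀ z : Z, ∃ ε > (0 : ℝ), IsComplete (Metric.closedBall z ε)

/-- The measure `μ` is infinitesimally doubling. -/
def InfinitesimallyDoubling (μ : Measure Z) : Prop :=
  ∀ᵐ z ∂μ, ∃ K : ℝ≥0, ∃ r₀ > (0 : ℝ), ∀ r : ℝ, 0 < r → r < r₀ →
    μ (Metric.ball z (2 * r)) ≤ K * μ (Metric.ball z r)

/-- Every ball has positive and finite measure. -/
def BallsPosFin (μ : Measure Z) : Prop :=
  ∀ (z : Z) (r : ℝ), 0 < r → 0 < μ (Metric.ball z r) ∧ μ (Metric.ball z r) < ∞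

/-- `ρ` is an `∞`-weak upper gradient of `u`. -/
def IsInfWeakUpperGrad (μ : Measure Z) (u : Z → ℝ) (ρ : Z → ℝ≥0∞) : Prop :=
  Measurable ρ ∧ ∃ Γ₀ : Set (Curve Z), InfNegligible μ Γ₀ ∧
    ∀ γ : Curve Z, γ ∉ Γ₀ → ENNReal.ofReal |u γ.start - u γ.finish| ≤ γ.integ ρ


/-!
Fix `x ≠ y`, the null set `N` where a test function `ρ` is nonzero, and the parameter interval
`[0, C' d(x, y)]`. Thickness, applied to small balls with `N` removed, gives a `C`-quasiconvex
curve of zero length in `N` from a point near `x` to a point near `y`; the slack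
`(C' - C) d(x, y)` leaves room to run it and to keep two short gaps, around `x` and `y`, for
the remaining jumps. Each gap is filled in the same way, leaving two gaps of at most a quarter
of its length. The approximating maps converge, thanks to local completeness, to a
`1`-Lipschitz curve from `x` to `y`. It meets `N` only at parameters that lie in gaps at every
stage, a set of measure zero, or that are mapped into `N` by one of the inserted curves, again
a null set. So `∫_γ ρ = 0`, and `ρ` does not witness negligibility.
-/

open Filter Topology

theorem IsComplete.of_isClosed_subset {α : Type*} [UniformSpace α] {s t : Set α}
    (ht : IsComplete t) (hs : IsClosed s) (hst : s ⊆ t) : IsComplete s := by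
  intro f hf hfs
  obtain ⟨x, -, hx⟩ := ht f hf (hfs.trans (principal_mono.2 hst))
  have := hf.1
  exact ⟨x, hs.mem_of_tendsto (f := id) hx (hfs (mem_principal_self s)), hx⟩

theorem LipschitzOnWith.congr {α β : Type*} [PseudoEMetricSpace α] [PseudoEMetricSpace β]
    {K : ℝ≥0} {s : Set α} {f g : α → β} (hf : LipschitzOnWith K f s) (h : EqOn f g s) :
    LipschitzOnWith K g s := fun x hx y hy => by
  rw [← h hx, ← h hy]
  exact hf hx hy

theorem LipschitzOnWith.union_of_le {α : Type*} [PseudoMetricSpace α] {f : ℝ → α} {K : ℝ≥0}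
    {s t : Set ℝ} {m : ℝ} (hs : LipschitzOnWith K f s) (ht : LipschitzOnWith K f t)
    (hms : m ∈ s) (hmt : m ∈ t) (hs_le : ∀ x ∈ s, x ≤ m) (ht_ge : ∀ y ∈ t, m ≤ y) :
    LipschitzOnWith K f (s ∪ t) := by
  rw [lipschitzOnWith_iff_dist_le_mul] at hs ht ⊢
  have cross : ∀ x ∈ s, ∀ y ∈ t, dist (f x) (f y) ≤ K * dist x y := fun x hx y hy =>
    calc dist (f x) (f y) ≤ dist (f x) (f m) + dist (f m) (f y) := dist_triangle _ _ _
      _ ≤ K * dist x m + K * dist m y := add_le_add (hs x hx m hms) (ht m hmt y hy)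
      _ = K * dist x y := by
        rw [← mul_add, Real.dist_eq, Real.dist_eq, Real.dist_eq,
          abs_of_nonpos (sub_nonpos.2 (hs_le x hx)), abs_of_nonpos (sub_nonpos.2 (ht_ge y hy)),
          abs_of_nonpos (sub_nonpos.2 ((hs_le x hx).trans (ht_ge y hy)))]
        ring
  rintro x (hx | hx) y (hy | hy)
  · exact hs x hx y hy
  · exact cross x hx y hy
  · rw [dist_comm, dist_comm x]
    exact cross y hy x hx
  · exact ht x hx y hy

theorem tendsto_div_two_pow (c : ℝ) : Tendsto (fun k : ℕ => c / 2 ^ k) atTop (𝓝 0) :=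
  tendsto_const_nhds.div_atTop (tendsto_pow_atTop_atTop_of_one_lt one_lt_two)

namespace Curve

variable {X : Type*} [MetricSpace X]

def const (x : X) : Curve X := ⟨fun _ => x, 0, le_rfl, (LipschitzWith.const' x).lipschitzOnWith⟩

noncomputable def extend (c : Curve X) : ℝ → X := IccExtend c.len_nonneg (c.toFun ∘ Subtype.val)

theorem lipschitzWith_extend (c : Curve X) : LipschitzWith 1 c.extend := by
  have h := c.lip.to_restrict.comp (LipschitzWith.projIcc c.len_nonneg)
  rwa [mul_one] at h

theorem lipschitzWith_extend_sub (c : Curve X) (m : ℝ) :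
    LipschitzWith 1 fun t => c.extend (t - m) :=
  LipschitzWith.of_dist_le_mul fun s t => by
    simpa [dist_sub_right] using c.lipschitzWith_extend.dist_le_mul (s - m) (t - m)

theorem extend_zero (c : Curve X) : c.extend 0 = c.start :=
  IccExtend_left c.len_nonneg _

theorem extend_of_mem (c : Curve X) {s : ℝ} (hs : s ∈ Icc 0 c.len) : c.extend s = c.toFun s :=
  IccExtend_of_mem c.len_nonneg _ hs

theorem extend_of_len_le (c : Curve X) {s : ℝ} (hs : c.len ≤ s) : c.extend s = c.finish :=
  IccExtend_of_right_le c.len_nonneg _ hs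

theorem dist_start_finish_le (c : Curve X) : dist c.start c.finish ≤ c.len := by
  simpa [start, finish, Real.dist_eq, abs_of_nonneg c.len_nonneg] using
    c.lip.dist_le_mul 0 ⟨le_rfl, c.len_nonneg⟩ c.len ⟨c.len_nonneg, le_rfl⟩

def ZeroLengthIn (c : Curve X) (N : Set X) : Prop :=
  ∀ᵐ s, s ∈ Icc 0 c.len → c.toFun s ∉ N

theorem zeroLengthIn_const (x : X) (N : Set X) : (const x).ZeroLengthIn N := by
  filter_upwards [measure_eq_zero_iff_ae_notMem.1 (Real.volume_singleton (a := 0))] with s hs h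
  simp only [const, Icc_self] at h
  exact absurd h hs

theorem ZeroLengthIn.ae_extend_notMem {c : Curve X} {N : Set X} (hc : c.ZeroLengthIn N)
    (hN : c.finish ∉ N) : ∀ᵐ s, 0 ≤ s → c.extend s ∉ N := by
  filter_upwards [hc] with s hs h0
  rcases le_total s c.len with h | h
  · rw [c.extend_of_mem ⟨h0, h⟩]
    exact hs ⟨h0, h⟩
  · rwa [c.extend_of_len_le h]

theorem integ_eq_zero_of_zeroLengthIn (c : Curve X) {ρ : X → ℝ≥0∞}
    (h : c.ZeroLengthIn {x | ρ x ≠ 0}) : c.integ ρ = 0 := by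
  rw [integ, setLIntegral_congr_fun_ae measurableSet_Icc (g := 0)
    (h.mono fun s hs hsI => not_not.1 (hs hsI))]
  exact lintegral_zero

theorem zeroLengthIn_of_integ_indicator_ne_top [MeasurableSpace X] [BorelSpace X]
    (c : Curve X) {N : Set X} (hN : MeasurableSet N)
    (h : c.integ (N.indicator fun _ => ∞) ≠ ∞) : c.ZeroLengthIn N := by
  have hmeas : AEMeasurable (fun s => N.indicator (fun _ => ∞) (c.toFun s))
      (volume.restrict (Icc 0 c.len)) :=
    (measurable_const.indicator hN).comp_aemeasurable
      (c.lip.continuousOn.aemeasurable measurableSet_Icc)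
  refine (ae_restrict_iff' measurableSet_Icc).1 ?_
  filter_upwards [ae_lt_top' hmeas h] with s hs hsN
  simp [indicator_of_mem hsN] at hs

end Curve

/-- The parameter interval `[a, b]` still has to be mapped onto a path from `p` to `q`. -/
structure Gap (X : Type*) where
  a : ℝ
  b : ℝ
  p : X
  q : X

/-- A fill of a gap `[a, b]` runs the curve `c` from time `a + τ` on and leaves the two gaps
`[a, a + τ]` and `[b - τ, b]`. -/
structure Fill (X : Type*) [MetricSpace X] where
  τ : ℝ
  c : Curve X

namespace Gap

variable {X : Type*} [MetricSpace X]

def left (g : Gap X) (f : Fill X) : Gap X := ⟨g.a, g.a + f.τ, g.p, f.c.start⟩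

def right (g : Gap X) (f : Fill X) : Gap X := ⟨g.b - f.τ, g.b, f.c.finish, g.q⟩

/-- Each leftover gap is at most a quarter of `[a, b]`, so the total length of the gaps halves
in every round; the complete balls provide the limits at parameters that are never filled; and
the curve waits at its end point until time `b - τ`, so that point has to avoid `N`. -/
structure IsFill (N : Set X) (g : Gap X) (f : Fill X) : Prop where
  τ_pos : 0 < f.τ
  τ_le : f.τ ≤ (g.b - g.a) / 4
  room : 2 * f.τ + f.c.len < g.b - g.a
  dist_start : dist g.p f.c.start ≤ f.τ
  dist_finish : dist f.c.finish g.q ≤ f.τ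
  isComplete_left : IsComplete (closedBall g.p f.τ)
  isComplete_right : IsComplete (closedBall g.q f.τ)
  zeroLengthIn : f.c.ZeroLengthIn N
  finish_notMem : f.c.finish ∉ N

variable {N : Set X} {g : Gap X} {f : Fill X}

theorem IsFill.a_lt_b (hf : g.IsFill N f) : g.a < g.b := by
  linarith [hf.τ_pos, hf.room, f.c.len_nonneg]

theorem IsFill.dist_p_q_le (hf : g.IsFill N f) : dist g.p g.q ≤ g.b - g.a :=
  calc dist g.p g.q ≤ dist g.p f.c.start + dist f.c.start f.c.finish + dist f.c.finish g.q :=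
        dist_triangle4 _ _ _ _
    _ ≤ f.τ + f.c.len + f.τ :=
      add_le_add (add_le_add hf.dist_start f.c.dist_start_finish_le) hf.dist_finish
    _ ≤ g.b - g.a := by linarith [hf.room]

end Gap

structure GapFilling {X : Type*} [MetricSpace X] (N : Set X) (P : Gap X → Prop) where
  fill : Gap X → Fill X
  isFill : ∀ g, P g → g.IsFill N (fill g)
  good_left : ∀ g, P g → P (g.left (fill g))
  good_right : ∀ g, P g → P (g.right (fill g))

namespace GapFilling

variable {X : Type*} [MetricSpace X] {N : Set X} {P : Gap X → Prop}

theorem nonempty (h : ∀ g, P g → ∃ f, g.IsFill N f ∧ P (g.left f) ∧ P (g.right f)) :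
    Nonempty (GapFilling N P) := by
  have h' : ∀ g, ∃ f : Fill X, P g → g.IsFill N f ∧ P (g.left f) ∧ P (g.right f) := fun g => by
    by_cases hg : P g
    · obtain ⟨f, hf⟩ := h g hg
      exact ⟨f, fun _ => hf⟩
    · exact ⟨⟨0, Curve.const g.p⟩, fun h => absurd h hg⟩
  choose fill hfill using h'
  exact ⟨⟨fill, fun g hg => (hfill g hg).1, fun g hg => (hfill g hg).2.1,
    fun g hg => (hfill g hg).2.2⟩⟩

variable (S : GapFilling N P)

def leftGap (g : Gap X) : Gap X := g.left (S.fill g)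

def rightGap (g : Gap X) : Gap X := g.right (S.fill g)

/-- The `k`-th stage of the construction: every gap left after `k` rounds of filling is
traversed by standing still at its initial point. -/
noncomputable def approx : ℕ → Gap X → ℝ → X
  | 0, g, t => if t < g.b then g.p else g.q
  | k + 1, g, t =>
    if t ≤ (S.leftGap g).b then approx k (S.leftGap g) t
    else if t < (S.rightGap g).a then (S.fill g).c.extend (t - (S.leftGap g).b)
    else approx k (S.rightGap g) t

def gapSet : ℕ → Gap X → Set ℝ
  | 0, g => Ioo g.a g.b
  | k + 1, g => gapSet k (S.leftGap g) ∪ gapSet k (S.rightGap g)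

noncomputable def limit (g : Gap X) (t : ℝ) : X :=
  haveI : Nonempty X := ⟨g.p⟩
  limUnder atTop fun k => S.approx k g t

variable {g : Gap X}

theorem good_leftGap (hg : P g) : P (S.leftGap g) := S.good_left g hg

theorem good_rightGap (hg : P g) : P (S.rightGap g) := S.good_right g hg

section Layout

variable (hg : P g)
include hg

theorem a_lt_left_b : g.a < (S.leftGap g).b := by
  simpa [leftGap, Gap.left] using (S.isFill g hg).τ_pos

theorem left_b_lt_right_a : (S.leftGap g).b < (S.rightGap g).a := by
  have := (S.isFill g hg).room
  have := (S.fill g).c.len_nonneg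
  simp only [leftGap, rightGap, Gap.left, Gap.right]
  linarith

theorem right_a_lt_b : (S.rightGap g).a < g.b := by
  simpa [rightGap, Gap.right] using (S.isFill g hg).τ_pos

theorem left_length_div_le (k : ℕ) :
    ((S.leftGap g).b - (S.leftGap g).a) / 2 ^ k ≤ (g.b - g.a) / 2 ^ (k + 1) / 2 := by
  have h : (g.b - g.a) / 2 ^ (k + 1) / 2 = (g.b - g.a) / 4 / 2 ^ k := by ring
  rw [h]
  gcongr
  simpa [leftGap, Gap.left] using (S.isFill g hg).τ_le

theorem right_length_div_le (k : ℕ) :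
    ((S.rightGap g).b - (S.rightGap g).a) / 2 ^ k ≤ (g.b - g.a) / 2 ^ (k + 1) / 2 := by
  have h : (g.b - g.a) / 2 ^ (k + 1) / 2 = (g.b - g.a) / 4 / 2 ^ k := by ring
  rw [h]
  gcongr
  simpa [rightGap, Gap.right] using (S.isFill g hg).τ_le

end Layout

theorem mem_Icc_cases {t : ℝ} (ht : t ∈ Icc g.a g.b) :
    t ∈ Icc g.a (S.leftGap g).b ∨
      t ∈ Icc (S.leftGap g).b (S.rightGap g).a ∨
      t ∈ Icc (S.rightGap g).a g.b := by
  rcases le_total t (S.leftGap g).b with h | h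
  · exact Or.inl ⟨ht.1, h⟩
  rcases le_total t (S.rightGap g).a with h' | h'
  · exact Or.inr (Or.inl ⟨h, h'⟩)
  · exact Or.inr (Or.inr ⟨h', ht.2⟩)

theorem approx_a (k : ℕ) (hg : P g) : S.approx k g g.a = g.p := by
  induction k generalizing g with
  | zero => simp [approx, (S.isFill g hg).a_lt_b]
  | succ k ih =>
    rw [approx, if_pos (S.a_lt_left_b hg).le]
    exact ih (S.good_leftGap hg)

theorem approx_b (k : ℕ) (hg : P g) : S.approx k g g.b = g.q := by
  induction k generalizing g with
  | zero => simp [approx]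
  | succ k ih =>
    rw [approx, if_neg (not_le.2 ((S.left_b_lt_right_a hg).trans (S.right_a_lt_b hg))),
      if_neg (not_lt.2 (S.right_a_lt_b hg).le)]
    exact ih (S.good_rightGap hg)

theorem approx_succ_of_le (k : ℕ) {t : ℝ} (ht : t ≤ (S.leftGap g).b) :
    S.approx (k + 1) g t = S.approx k (S.leftGap g) t := by
  rw [approx, if_pos ht]

theorem approx_succ_of_ge (k : ℕ) (hg : P g) {t : ℝ} (ht : (S.rightGap g).a ≤ t) :
    S.approx (k + 1) g t = S.approx k (S.rightGap g) t := by
  rw [approx, if_neg (not_le.2 ((S.left_b_lt_right_a hg).trans_le ht)), if_neg (not_lt.2 ht)]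

theorem approx_succ_of_mem_Icc (k : ℕ) (hg : P g) {t : ℝ}
    (ht : t ∈ Icc (S.leftGap g).b (S.rightGap g).a) :
    S.approx (k + 1) g t = (S.fill g).c.extend (t - (S.leftGap g).b) := by
  rcases ht.1.eq_or_lt with rfl | h₁
  · rw [S.approx_succ_of_le k le_rfl, S.approx_b k (S.good_leftGap hg), sub_self, Curve.extend_zero]
    rfl
  rcases ht.2.lt_or_eq with h₂ | rfl
  · rw [approx, if_neg (not_le.2 h₁), if_pos h₂]
  · rw [S.approx_succ_of_ge k hg le_rfl, S.approx_a k (S.good_rightGap hg), Curve.extend_of_len_le]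
    · rfl
    · have := (S.isFill g hg).room
      simp only [leftGap, rightGap, Gap.left, Gap.right]
      linarith

theorem gapSet_subset (k : ℕ) (hg : P g) : S.gapSet k g ⊆ Ioo g.a g.b := by
  induction k generalizing g with
  | zero => exact subset_rfl
  | succ k ih =>
    exact union_subset
      ((ih (S.good_leftGap hg)).trans (Ioo_subset_Ioo le_rfl
        ((S.left_b_lt_right_a hg).trans (S.right_a_lt_b hg)).le))
      ((ih (S.good_rightGap hg)).trans (Ioo_subset_Ioo
        ((S.a_lt_left_b hg).trans (S.left_b_lt_right_a hg)).le le_rfl))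

theorem a_mem_Icc_diff_gapSet (k : ℕ) (hg : P g) : g.a ∈ Icc g.a g.b \ S.gapSet k g :=
  ⟨left_mem_Icc.2 (S.isFill g hg).a_lt_b.le, fun h => lt_irrefl _ (S.gapSet_subset k hg h).1⟩

theorem b_mem_Icc_diff_gapSet (k : ℕ) (hg : P g) : g.b ∈ Icc g.a g.b \ S.gapSet k g :=
  ⟨right_mem_Icc.2 (S.isFill g hg).a_lt_b.le, fun h => lt_irrefl _ (S.gapSet_subset k hg h).2⟩

theorem mem_gapSet_succ_of_le (k : ℕ) (hg : P g) {t : ℝ} (ht : t ≤ (S.leftGap g).b) :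
    t ∈ S.gapSet (k + 1) g ↔ t ∈ S.gapSet k (S.leftGap g) := by
  refine ⟨fun h => h.resolve_right fun h' => ?_, Or.inl⟩
  linarith [(S.gapSet_subset k (S.good_rightGap hg) h').1, S.left_b_lt_right_a hg]

theorem mem_gapSet_succ_of_ge (k : ℕ) (hg : P g) {t : ℝ} (ht : (S.rightGap g).a ≤ t) :
    t ∈ S.gapSet (k + 1) g ↔ t ∈ S.gapSet k (S.rightGap g) := by
  refine ⟨fun h => h.resolve_left fun h' => ?_, Or.inr⟩
  linarith [(S.gapSet_subset k (S.good_leftGap hg) h').2, S.left_b_lt_right_a hg]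

theorem notMem_gapSet_succ (k : ℕ) (hg : P g) {t : ℝ}
    (ht : t ∈ Icc (S.leftGap g).b (S.rightGap g).a) : t ∉ S.gapSet (k + 1) g := by
  rintro (h | h)
  · exact (ht.1.trans_lt (S.gapSet_subset k (S.good_leftGap hg) h).2).false
  · exact ((S.gapSet_subset k (S.good_rightGap hg) h).1.trans_le ht.2).false

theorem gapSet_succ_subset (k : ℕ) (hg : P g) : S.gapSet (k + 1) g ⊆ S.gapSet k g := by
  induction k generalizing g with
  | zero => exact S.gapSet_subset 1 hg
  | succ k ih => exact union_subset_union (ih (S.good_leftGap hg)) (ih (S.good_rightGap hg))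

theorem volume_gapSet_le (k : ℕ) (hg : P g) :
    volume (S.gapSet k g) ≤ ENNReal.ofReal ((g.b - g.a) / 2 ^ k) := by
  induction k generalizing g with
  | zero => simp [gapSet]
  | succ k ih =>
    have hl := S.left_length_div_le hg k
    have hr := S.right_length_div_le hg k
    have hτ := (S.isFill g hg).τ_pos
    calc volume (S.gapSet (k + 1) g)
        ≤ volume (S.gapSet k (S.leftGap g)) + volume (S.gapSet k (S.rightGap g)) :=
          measure_union_le _ _
      _ ≤ _ := add_le_add (ih (S.good_leftGap hg)) (ih (S.good_rightGap hg))
      _ = _ := (ENNReal.ofReal_add (by simp [leftGap, Gap.left]; positivity)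
          (by simp [rightGap, Gap.right]; positivity)).symm
      _ ≤ _ := ENNReal.ofReal_le_ofReal (by linarith)

theorem Icc_diff_gapSet_succ_subset (k : ℕ) (hg : P g) :
    Icc g.a g.b \ S.gapSet (k + 1) g ⊆
      (Icc g.a (S.leftGap g).b \ S.gapSet k (S.leftGap g) ∪
        Icc (S.leftGap g).b (S.rightGap g).a) ∪
      (Icc (S.rightGap g).a g.b \ S.gapSet k (S.rightGap g)) := by
  rintro t ⟨ht, htG⟩
  rcases S.mem_Icc_cases ht with h | h | h
  · exact Or.inl (Or.inl ⟨h, fun h' => htG ((S.mem_gapSet_succ_of_le k hg h.2).2 h')⟩)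
  · exact Or.inl (Or.inr h)
  · exact Or.inr ⟨h, fun h' => htG ((S.mem_gapSet_succ_of_ge k hg h.1).2 h')⟩

theorem lipschitzOnWith_approx (k : ℕ) (hg : P g) :
    LipschitzOnWith 1 (S.approx k g) (Icc g.a g.b \ S.gapSet k g) := by
  induction k generalizing g with
  | zero =>
    have hab := (S.isFill g hg).a_lt_b
    have hpq := (S.isFill g hg).dist_p_q_le
    rw [gapSet, Icc_sdiff_Ioo_same hab.le, lipschitzOnWith_iff_dist_le_mul]
    rintro x (rfl | rfl) y (rfl | rfl) <;>
      simp [S.approx_a 0 hg, S.approx_b 0 hg, dist_comm g.q, Real.dist_eq, abs_sub_comm g.a g.b,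
        abs_of_pos (sub_pos.2 hab), hpq]
  | succ k ih =>
    have hL : LipschitzOnWith 1 (S.approx (k + 1) g)
        (Icc g.a (S.leftGap g).b \ S.gapSet k (S.leftGap g)) :=
      (ih (S.good_leftGap hg)).congr fun t ht => (S.approx_succ_of_le k ht.1.2).symm
    have hM : LipschitzOnWith 1 (S.approx (k + 1) g)
        (Icc (S.leftGap g).b (S.rightGap g).a) :=
      ((S.fill g).c.lipschitzWith_extend_sub _).lipschitzOnWith.congr fun t ht =>
        (S.approx_succ_of_mem_Icc k hg ht).symm
    have hR : LipschitzOnWith 1 (S.approx (k + 1) g)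
        (Icc (S.rightGap g).a g.b \ S.gapSet k (S.rightGap g)) :=
      (ih (S.good_rightGap hg)).congr fun t ht =>
        (S.approx_succ_of_ge k hg ht.1.1).symm
    refine ((hL.union_of_le hM (S.b_mem_Icc_diff_gapSet k (S.good_leftGap hg))
      ⟨le_rfl, (S.left_b_lt_right_a hg).le⟩ (fun x hx => hx.1.2) (fun y hy => hy.1)).union_of_le
      hR (Or.inr ⟨(S.left_b_lt_right_a hg).le, le_rfl⟩)
      (S.a_mem_Icc_diff_gapSet k (S.good_rightGap hg))
      ?_ (fun y hy => hy.1.1)).mono (S.Icc_diff_gapSet_succ_subset k hg)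
    rintro x (hx | hx)
    · exact hx.1.2.trans (S.left_b_lt_right_a hg).le
    · exact hx.2

theorem exists_near (k : ℕ) (hg : P g) {t : ℝ} (ht : t ∈ Icc g.a g.b) :
    ∃ t' ∈ Icc g.a g.b \ S.gapSet k g,
      |t - t'| ≤ (g.b - g.a) / 2 ^ k ∧ S.approx k g t' = S.approx k g t := by
  induction k generalizing g with
  | zero =>
    by_cases h : t ∈ Ioo g.a g.b
    · refine ⟨g.a, S.a_mem_Icc_diff_gapSet 0 hg, ?_, ?_⟩
      · rw [abs_of_nonneg (sub_nonneg.2 ht.1)]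
        simpa using ht.2
      · simp [approx, (S.isFill g hg).a_lt_b, h.2]
    · exact ⟨t, ⟨ht, h⟩, by simpa using (S.isFill g hg).a_lt_b.le, rfl⟩
  | succ k ih =>
    have hl := S.left_length_div_le hg k
    have hr := S.right_length_div_le hg k
    have hab := (S.isFill g hg).a_lt_b
    have hpos : 0 ≤ (g.b - g.a) / 2 ^ (k + 1) := by
      have := hab.le
      positivity
    rcases S.mem_Icc_cases ht with h | h | h
    · obtain ⟨t', ⟨ht'I, ht'G⟩, hdist, hval⟩ := ih (S.good_leftGap hg) h
      refine ⟨t', ⟨⟨ht'I.1, ht'I.2.trans ?_⟩,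
        fun h' => ht'G ((S.mem_gapSet_succ_of_le k hg ht'I.2).1 h')⟩, by linarith, ?_⟩
      · exact ((S.left_b_lt_right_a hg).trans (S.right_a_lt_b hg)).le
      · rw [S.approx_succ_of_le k ht'I.2, S.approx_succ_of_le k h.2, hval]
    · exact ⟨t, ⟨ht, S.notMem_gapSet_succ k hg h⟩, by simpa using hpos, rfl⟩
    · obtain ⟨t', ⟨ht'I, ht'G⟩, hdist, hval⟩ := ih (S.good_rightGap hg) h
      refine ⟨t', ⟨⟨?_, ht'I.2⟩,
        fun h' => ht'G ((S.mem_gapSet_succ_of_ge k hg ht'I.1).1 h')⟩, by linarith, ?_⟩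
      · exact ((S.a_lt_left_b hg).trans (S.left_b_lt_right_a hg)).le.trans ht'I.1
      · rw [S.approx_succ_of_ge k hg ht'I.1, S.approx_succ_of_ge k hg h.1, hval]

theorem dist_approx_le (k : ℕ) (hg : P g) {s t : ℝ} (hs : s ∈ Icc g.a g.b)
    (ht : t ∈ Icc g.a g.b) :
    dist (S.approx k g s) (S.approx k g t) ≤ dist s t + 2 * ((g.b - g.a) / 2 ^ k) := by
  obtain ⟨s', hs', hss', hvs⟩ := S.exists_near k hg hs
  obtain ⟨t', ht', htt', hvt⟩ := S.exists_near k hg ht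
  rw [← hvs, ← hvt]
  refine ((S.lipschitzOnWith_approx k hg).dist_le_mul s' hs' t' ht').trans ?_
  rw [NNReal.coe_one, one_mul, Real.dist_eq, Real.dist_eq]
  have h₁ := abs_sub_le s' s t'
  have h₂ := abs_sub_le s t t'
  rw [abs_sub_comm s' s] at h₁
  linarith

theorem dist_approx_p_le (k : ℕ) (hg : P g) {t : ℝ} (ht : t ∈ Icc g.a g.b) :
    dist (S.approx k g t) g.p ≤ g.b - g.a := by
  obtain ⟨t', ht', -, hval⟩ := S.exists_near k hg ht
  rw [← hval, ← S.approx_a k hg]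
  refine ((S.lipschitzOnWith_approx k hg).dist_le_mul t' ht' g.a
    (S.a_mem_Icc_diff_gapSet k hg)).trans ?_
  rw [NNReal.coe_one, one_mul, Real.dist_eq, abs_of_nonneg (sub_nonneg.2 ht'.1.1)]
  linarith [ht'.1.2]

theorem dist_approx_q_le (k : ℕ) (hg : P g) {t : ℝ} (ht : t ∈ Icc g.a g.b) :
    dist (S.approx k g t) g.q ≤ g.b - g.a := by
  obtain ⟨t', ht', -, hval⟩ := S.exists_near k hg ht
  rw [← hval, ← S.approx_b k hg]
  refine ((S.lipschitzOnWith_approx k hg).dist_le_mul t' ht' g.b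
    (S.b_mem_Icc_diff_gapSet k hg)).trans ?_
  rw [NNReal.coe_one, one_mul, Real.dist_eq, abs_of_nonpos (sub_nonpos.2 ht'.1.2)]
  linarith [ht'.1.1]

theorem dist_approx_succ_le (k : ℕ) (hg : P g) {t : ℝ} (ht : t ∈ Icc g.a g.b) :
    dist (S.approx k g t) (S.approx (k + 1) g t) ≤ (g.b - g.a) / 2 ^ k := by
  induction k generalizing g with
  | zero =>
    rcases ht.2.lt_or_eq with h | rfl
    · rw [approx, if_pos h, dist_comm, pow_zero, div_one]
      exact S.dist_approx_p_le 1 hg ht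
    · rw [S.approx_b 0 hg, S.approx_b 1 hg, dist_self]
      simpa using (S.isFill g hg).a_lt_b.le
  | succ k ih =>
    have hl := S.left_length_div_le hg k
    have hr := S.right_length_div_le hg k
    have hpos : 0 ≤ (g.b - g.a) / 2 ^ (k + 1) := by
      have := (S.isFill g hg).a_lt_b.le
      positivity
    rcases S.mem_Icc_cases ht with h | h | h
    · rw [S.approx_succ_of_le (k + 1) h.2, S.approx_succ_of_le k h.2]
      linarith [ih (S.good_leftGap hg) h]
    · rw [S.approx_succ_of_mem_Icc (k + 1) hg h, S.approx_succ_of_mem_Icc k hg h, dist_self]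
      exact hpos
    · rw [S.approx_succ_of_ge (k + 1) hg h.1, S.approx_succ_of_ge k hg h.1]
      linarith [ih (S.good_rightGap hg) h]

theorem approx_succ_eq_of_notMem (k : ℕ) (hg : P g) {t : ℝ} (ht : t ∈ Icc g.a g.b)
    (htk : t ∉ S.gapSet k g) : S.approx (k + 1) g t = S.approx k g t := by
  induction k generalizing g with
  | zero =>
    have : t ∈ Icc g.a g.b \ Ioo g.a g.b := ⟨ht, htk⟩
    rw [Icc_sdiff_Ioo_same (S.isFill g hg).a_lt_b.le] at this
    rcases this with rfl | rfl
    · rw [S.approx_a 1 hg, S.approx_a 0 hg]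
    · rw [S.approx_b 1 hg, S.approx_b 0 hg]
  | succ k ih =>
    rcases S.mem_Icc_cases ht with h | h | h
    · rw [S.approx_succ_of_le (k + 1) h.2, S.approx_succ_of_le k h.2]
      exact ih (S.good_leftGap hg) h fun h' => htk ((S.mem_gapSet_succ_of_le k hg h.2).2 h')
    · rw [S.approx_succ_of_mem_Icc (k + 1) hg h, S.approx_succ_of_mem_Icc k hg h]
    · rw [S.approx_succ_of_ge (k + 1) hg h.1, S.approx_succ_of_ge k hg h.1]
      exact ih (S.good_rightGap hg) h fun h' => htk ((S.mem_gapSet_succ_of_ge k hg h.1).2 h')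

theorem approx_eq_of_notMem {k m : ℕ} (hkm : k ≤ m) (hg : P g) {t : ℝ} (ht : t ∈ Icc g.a g.b)
    (htk : t ∉ S.gapSet k g) : S.approx m g t = S.approx k g t := by
  have hantitone : Antitone fun k => S.gapSet k g :=
    antitone_nat_of_succ_le fun k => S.gapSet_succ_subset k hg
  induction m, hkm using Nat.le_induction with
  | base => rfl
  | succ m hkm ih =>
    rw [S.approx_succ_eq_of_notMem m hg ht fun h => htk (hantitone hkm h), ih]

theorem cauchySeq_approx (hg : P g) {t : ℝ} (ht : t ∈ Icc g.a g.b) :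
    CauchySeq fun k => S.approx k g t :=
  cauchySeq_of_le_geometric_two (C := 2 * (g.b - g.a)) fun k => by
    rw [mul_div_cancel_left₀ _ two_ne_zero]
    exact S.dist_approx_succ_le k hg ht

theorem exists_tendsto_approx (hg : P g) {t : ℝ} (ht : t ∈ Icc g.a g.b) :
    ∃ x, Tendsto (fun k => S.approx k g t) atTop (𝓝 x) := by
  suffices ∃ x, Tendsto (fun k => S.approx (k + 1) g t) atTop (𝓝 x) from
    let ⟨x, hx⟩ := this
    ⟨x, (tendsto_add_atTop_iff_nat 1).1 hx⟩
  have hf := S.isFill g hg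
  rcases S.mem_Icc_cases ht with h | h | h
  · simp_rw [S.approx_succ_of_le _ h.2]
    obtain ⟨x, -, hx⟩ := cauchySeq_tendsto_of_isComplete hf.isComplete_left
      (fun k => mem_closedBall.2 <| by
        simpa [leftGap, Gap.left] using S.dist_approx_p_le k (S.good_leftGap hg) h)
      (S.cauchySeq_approx (S.good_leftGap hg) h)
    exact ⟨x, hx⟩
  · simp_rw [S.approx_succ_of_mem_Icc _ hg h]
    exact ⟨_, tendsto_const_nhds⟩
  · simp_rw [S.approx_succ_of_ge _ hg h.1]
    obtain ⟨x, -, hx⟩ := cauchySeq_tendsto_of_isComplete hf.isComplete_right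
      (fun k => mem_closedBall.2 <| by
        simpa [rightGap, Gap.right] using S.dist_approx_q_le k (S.good_rightGap hg) h)
      (S.cauchySeq_approx (S.good_rightGap hg) h)
    exact ⟨x, hx⟩

theorem tendsto_limit (hg : P g) {t : ℝ} (ht : t ∈ Icc g.a g.b) :
    Tendsto (fun k => S.approx k g t) atTop (𝓝 (S.limit g t)) :=
  tendsto_nhds_limUnder (S.exists_tendsto_approx hg ht)

theorem limit_eq_approx {k : ℕ} (hg : P g) {t : ℝ} (ht : t ∈ Icc g.a g.b)
    (htk : t ∉ S.gapSet k g) : S.limit g t = S.approx k g t :=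
  tendsto_nhds_unique (S.tendsto_limit hg ht)
    (tendsto_atTop_of_eventually_const fun _ hm => S.approx_eq_of_notMem hm hg ht htk)

theorem limit_a (hg : P g) : S.limit g g.a = g.p := by
  rw [S.limit_eq_approx hg (S.a_mem_Icc_diff_gapSet 0 hg).1 (S.a_mem_Icc_diff_gapSet 0 hg).2,
    S.approx_a 0 hg]

theorem limit_b (hg : P g) : S.limit g g.b = g.q := by
  rw [S.limit_eq_approx hg (S.b_mem_Icc_diff_gapSet 0 hg).1 (S.b_mem_Icc_diff_gapSet 0 hg).2,
    S.approx_b 0 hg]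

theorem lipschitzOnWith_limit (hg : P g) : LipschitzOnWith 1 (S.limit g) (Icc g.a g.b) := by
  rw [lipschitzOnWith_iff_dist_le_mul]
  intro s hs t ht
  rw [NNReal.coe_one, one_mul]
  have herr := ((tendsto_div_two_pow (g.b - g.a)).const_mul 2).const_add (dist s t)
  rw [mul_zero, add_zero] at herr
  exact le_of_tendsto_of_tendsto' ((S.tendsto_limit hg hs).dist (S.tendsto_limit hg ht)) herr
    fun k => S.dist_approx_le k hg hs ht

theorem volume_iInter_gapSet (hg : P g) : volume (⋂ k, S.gapSet k g) = 0 := by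
  have h := ENNReal.tendsto_ofReal (tendsto_div_two_pow (g.b - g.a))
  rw [ENNReal.ofReal_zero] at h
  exact le_antisymm (ge_of_tendsto' h fun k =>
    (measure_mono (iInter_subset _ k)).trans (S.volume_gapSet_le k hg)) bot_le

theorem ae_approx_notMem (k : ℕ) (hg : P g) :
    ∀ᵐ t, t ∈ Icc g.a g.b \ S.gapSet k g → S.approx k g t ∉ N := by
  induction k generalizing g with
  | zero =>
    rw [gapSet, Icc_sdiff_Ioo_same (S.isFill g hg).a_lt_b.le]
    filter_upwards [measure_eq_zero_iff_ae_notMem.1 ((toFinite {g.a, g.b}).measure_zero volume)]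
      with t ht ht' using absurd ht' ht
  | succ k ih =>
    have hf := S.isFill g hg
    have hM : ∀ᵐ t, t ∈ Icc (S.leftGap g).b (S.rightGap g).a →
        (S.fill g).c.extend (t - (S.leftGap g).b) ∉ N :=
      ((measurePreserving_sub_right volume _).quasiMeasurePreserving.ae
        (hf.zeroLengthIn.ae_extend_notMem hf.finish_notMem)).mono fun t h ht =>
          h (sub_nonneg.2 ht.1)
    filter_upwards [ih (S.good_leftGap hg), ih (S.good_rightGap hg), hM] with t hL hR hM ht
    obtain ⟨ht, htG⟩ := ht
    rcases S.mem_Icc_cases ht with h | h | h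
    · rw [S.approx_succ_of_le k h.2]
      exact hL ⟨h, fun h' => htG ((S.mem_gapSet_succ_of_le k hg h.2).2 h')⟩
    · rw [S.approx_succ_of_mem_Icc k hg h]
      exact hM h
    · rw [S.approx_succ_of_ge k hg h.1]
      exact hR ⟨h, fun h' => htG ((S.mem_gapSet_succ_of_ge k hg h.1).2 h')⟩

theorem ae_limit_notMem (hg : P g) : ∀ᵐ t, t ∈ Icc g.a g.b → S.limit g t ∉ N := by
  filter_upwards [ae_all_iff.2 fun k => S.ae_approx_notMem k hg,
    measure_eq_zero_iff_ae_notMem.1 (S.volume_iInter_gapSet hg)] with t hN hG ht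
  obtain ⟨k, hk⟩ : ∃ k, t ∉ S.gapSet k g := by simpa using hG
  rw [S.limit_eq_approx hg ht hk]
  exact hN k ⟨ht, hk⟩

include S in
theorem exists_curve (hg : P g) :
    ∃ γ : Curve X, γ.start = g.p ∧ γ.finish = g.q ∧ γ.len = g.b - g.a ∧ γ.ZeroLengthIn N := by
  have hab := (S.isFill g hg).a_lt_b
  have hmaps : MapsTo (fun s => g.a + s) (Icc 0 (g.b - g.a)) (Icc g.a g.b) :=
    fun s hs => ⟨by linarith [hs.1], by linarith [hs.2]⟩
  refine ⟨⟨fun s => S.limit g (g.a + s), g.b - g.a, sub_nonneg.2 hab.le, ?_⟩, ?_, ?_, rfl, ?_⟩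
  · have h := (S.lipschitzOnWith_limit hg).comp
      (isometry_add_left g.a).lipschitz.lipschitzOnWith hmaps
    rwa [mul_one] at h
  · simpa [Curve.start] using S.limit_a hg
  · simpa [Curve.finish] using S.limit_b hg
  · exact ((measurePreserving_add_left volume g.a).quasiMeasurePreserving.ae
      (S.ae_limit_notMem hg)).mono fun s h hs => h (hmaps hs)

end GapFilling

def IsQCGap {X : Type*} [MetricSpace X] (C : ℝ) (x₀ : X) (R : ℝ≥0∞) (g : Gap X) : Prop :=
  C * dist g.p g.q < g.b - g.a ∧ edist g.p x₀ < R ∧ edist g.q x₀ < R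

namespace ThickQC

variable [BorelSpace Z] {μ : Measure Z} {C : ℝ} {R : ℝ≥0∞} {N : Set Z}

theorem exists_curve_near (h : ThickQC μ C R) (hC : 0 ≤ C) (hballs : BallsPosFin μ)
    (hN : MeasurableSet N) (hN0 : μ N = 0) {x₀ p q : Z} (hp : edist p x₀ < R)
    (hq : edist q x₀ < R) {η : ℝ} (hη : 0 < η) :
    ∃ c : Curve Z, dist p c.start < η ∧ dist c.finish q < η ∧
      edist c.start x₀ < R ∧ edist c.finish x₀ < R ∧ c.finish ∉ N ∧
      c.len ≤ C * (dist p q + 2 * η) ∧ c.ZeroLengthIn N := by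
  obtain ⟨rp, hrp, hrpR⟩ := Metric.isOpen_iff.1 isOpen_eball p hp
  obtain ⟨rq, hrq, hrqR⟩ := Metric.isOpen_iff.1 isOpen_eball q hq
  have hE : ball p (min η rp) \ N ⊆ {z | edist z x₀ < R} :=
    sdiff_subset.trans ((ball_subset_ball (min_le_right _ _)).trans hrpR)
  have hF : ball q (min η rq) \ N ⊆ {z | edist z x₀ < R} :=
    sdiff_subset.trans ((ball_subset_ball (min_le_right _ _)).trans hrqR)
  have hpos : ∀ z r, 0 < r → 0 < μ (ball z r \ N) := fun z r hr => by
    rw [measure_sdiff_null hN0]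
    exact (hballs z r hr).1
  have hnot := h x₀ _ _ (measurableSet_ball.diff hN) (measurableSet_ball.diff hN) hE hF
    (hpos p _ (lt_min hη hrp)) (hpos q _ (lt_min hη hrq))
  obtain ⟨c, ⟨hcE, hcF, hlen⟩, hc⟩ :
      ∃ c ∈ thickFam C (ball p (min η rp) \ N) (ball q (min η rq) \ N),
        c.integ (N.indicator fun _ => ∞) ≠ ∞ := by
    by_contra! hall
    exact hnot ⟨_, measurable_const.indicator hN,
      (measure_eq_zero_iff_ae_notMem.1 hN0).mono fun z hz => indicator_of_notMem hz _, hall⟩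
  have hs : dist p c.start < η := (mem_ball'.1 hcE.1).trans_le (min_le_left _ _)
  have hf : dist c.finish q < η := (mem_ball.1 hcF.1).trans_le (min_le_left _ _)
  refine ⟨c, hs, hf, hE hcE, hF hcF, hcF.2, hlen.trans ?_,
    c.zeroLengthIn_of_integ_indicator_ne_top hN hc⟩
  calc C * dist c.start c.finish
      ≤ C * (dist c.start p + dist p q + dist q c.finish) := by gcongr; exact dist_triangle4 _ _ _ _
    _ ≤ C * (dist p q + 2 * η) := mul_le_mul_of_nonneg_left
      (by rw [dist_comm c.start, dist_comm q]; linarith) hC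

theorem exists_isFill (h : ThickQC μ C R) (hC : 1 ≤ C) (hloc : LocallyComplete Z)
    (hballs : BallsPosFin μ) (hN : MeasurableSet N) (hN0 : μ N = 0) {x₀ : Z} {g : Gap Z}
    (hg : IsQCGap C x₀ R g) :
    ∃ f : Fill Z, g.IsFill N f ∧ IsQCGap C x₀ R (g.left f) ∧ IsQCGap C x₀ R (g.right f) := by
  obtain ⟨hgap, hp, hq⟩ := hg
  obtain ⟨εp, hεp, hcp⟩ := hloc g.p
  obtain ⟨εq, hεq, hcq⟩ := hloc g.q
  set τ := min ((g.b - g.a - C * dist g.p g.q) / 4) (min εp εq)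
  have hτ : 0 < τ := lt_min (by linarith) (lt_min hεp hεq)
  have hτδ : τ ≤ (g.b - g.a - C * dist g.p g.q) / 4 := min_le_left _ _
  have hC0 : 0 < C := by linarith
  have hCd : 0 ≤ C * dist g.p g.q := by positivity
  have hη : C * (τ / (2 * C)) = τ / 2 := by field_simp
  have hητ : τ / (2 * C) ≤ τ := div_le_self hτ.le (by linarith)
  obtain ⟨c, hs, hf, hsR, hfR, hfN, hlen, hc⟩ :=
    h.exists_curve_near hC0.le hballs hN hN0 hp hq (η := τ / (2 * C)) (by positivity)
  have hlen' : c.len ≤ C * dist g.p g.q + τ := by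
    rw [mul_add, ← mul_assoc, mul_comm C 2, mul_assoc, hη] at hlen
    linarith
  refine ⟨⟨τ, c⟩, ⟨hτ, by linarith, by linarith [c.len_nonneg], hs.le.trans hητ,
    hf.le.trans hητ, hcp.of_isClosed_subset isClosed_closedBall
      (closedBall_subset_closedBall ((min_le_right _ _).trans (min_le_left _ _))),
    hcq.of_isClosed_subset isClosed_closedBall
      (closedBall_subset_closedBall ((min_le_right _ _).trans (min_le_right _ _))), hc, hfN⟩,
    ⟨?_, hp, hsR⟩, ⟨?_, hfR, hq⟩⟩
  · have := mul_lt_mul_of_pos_left hs hC0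
    simp only [Gap.left]
    linarith
  · have := mul_lt_mul_of_pos_left hf hC0
    simp only [Gap.right]
    linarith

theorem exists_mem_qcFam_zeroLengthIn (h : ThickQC μ C R) (hC : 1 ≤ C)
    (hloc : LocallyComplete Z) (hballs : BallsPosFin μ) (hN : MeasurableSet N) (hN0 : μ N = 0)
    {C' : ℝ} (hC' : C < C') {x₀ x y : Z} (hx : edist x x₀ < R) (hy : edist y x₀ < R) :
    ∃ γ ∈ qcFam C' x y, γ.ZeroLengthIn N := by
  rcases eq_or_ne x y with rfl | hxy
  · exact ⟨Curve.const x, ⟨rfl, rfl, by simp [Curve.const]⟩, Curve.zeroLengthIn_const x N⟩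
  obtain ⟨S⟩ := GapFilling.nonempty fun g hg => h.exists_isFill hC hloc hballs hN hN0 hg
  have hroot : IsQCGap C x₀ R ⟨0, C' * dist x y, x, y⟩ :=
    ⟨by simpa using mul_lt_mul_of_pos_right hC' (dist_pos.2 hxy), hx, hy⟩
  obtain ⟨γ, h0, h1, hlen, hγ⟩ := S.exists_curve hroot
  exact ⟨γ, ⟨h0, h1, by simp [hlen]⟩, hγ⟩

end ThickQC

theorem veryThick_of_thick_general
    {Z : Type*} [MetricSpace Z] [MeasurableSpace Z] [BorelSpace Z] (μ : Measure Z)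
    (hloc : LocallyComplete Z)
    (hballs : BallsPosFin μ)
    (C : ℝ) (hC : 1 ≤ C) (R : ℝ≥0∞)
    (h : ThickQC μ C R) :
    ∀ C' > C, VeryThick μ C' R := by
  rintro C' hC' x₀ x y hx hy ⟨ρ, hρ, hρ0, hΓ⟩
  obtain ⟨γ, hγ, hγN⟩ := h.exists_mem_qcFam_zeroLengthIn hC hloc hballs
    (hρ (measurableSet_singleton 0)).compl (ae_iff.1 hρ0) hC' hx hy
  exact zero_ne_top ((γ.integ_eq_zero_of_zeroLengthIn hγN).symm.trans (hΓ γ hγ))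

/-- In a locally complete, infinitesimally doubling metric measure space
with balls of positive finite measure, ∞-thick (C,R)-quasiconvexity self-improves to
very ∞-thick (C',R)-quasiconvexity for every C' > C. -/
theorem veryThick_of_thick
    {Z : Type*} [MetricSpace Z] [MeasurableSpace Z] [BorelSpace Z] (μ : Measure Z)
    (hloc : LocallyComplete Z)
    (hdb : InfinitesimallyDoubling μ)
    (hballs : BallsPosFin μ)
    (C : ℝ) (hC : 1 ≤ C) (R : ℝ≥0∞) (hR : 0 < R)
    (h : ThickQC μ C R) :
    ∀ C' > C, VeryThick μ C' R :=
  veryThick_of_thick_general μ hloc hballs C hC R h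
end

section
/- Let Z be an infinitesimally doubling metric measure space that is ∞-thick (C,R)-quasiconvex. Then for every measurable function û : Z → ℝ with an ∞-weak upper gradient ρ ∈ L^∞(Z), the constant function C·‖ρ‖_{L^∞(Z)} is a Hajłasz gradient of û up to scale R; that is, there is a null set N such that |û(x) − û(y)| ≤ 2C·‖ρ‖_{L^∞(Z)}·d(x,y) for all x, y ∉ N with d(x,y) < R. -/
open MeasureTheory Metric Set ENNReal NNReal

variable {Z : Type*} [MetricSpace Z] [MeasurableSpace Z]

/-! Off a null set, every ball around a point `x` meets both `{u > u x - ε}` and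
`{u < u x + ε}` in positive measure: balls of positive finite measure force `Z` to be second
countable, and then the support of every measure is conull. For two such points `x`, `y`,
thickness yields a curve from a point `a` near `x` with `u a > u x - ε` to a point `b` near `y`
with `u b < u y + ε` that avoids the exceptional family of the weak upper gradient and spends no
length where `ρ > ‖ρ‖_∞`. Integrating `ρ` along it gives
`u x - u y < C ‖ρ‖_∞ (d(x, y) + 2r) + 2ε`, and `r, ε → 0`. -/

open Filter Topology Function

theorem Metric.exists_maximal_isSeparated {X : Type*} [PseudoEMetricSpace X] (ε : ℝ≥0∞)
    (s : Set X) : ∃ N, Maximal (fun N ↦ N ⊆ s ∧ IsSeparated ε N) N :=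
  zorn_subset _ fun c hcS hc ↦
    ⟨⋃₀ c, ⟨sUnion_subset fun _ ht ↦ (hcS ht).1,
      hc.pairwise_sUnion.2 fun _ ht ↦ (hcS ht).2⟩, fun _ ↦ subset_sUnion_of_mem⟩

namespace BallsPosFin

variable {μ : Measure Z}

theorem sigmaFinite (h : BallsPosFin μ) : SigmaFinite μ := by
  rcases isEmpty_or_nonempty Z with _ | ⟨⟨z₀⟩⟩
  · infer_instance
  refine Measure.sigmaFinite_of_countable (countable_range fun n : ℕ ↦ ball z₀ (n + 1))
    (forall_mem_range.2 fun n ↦ (h z₀ _ n.cast_add_one_pos).2) ?_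
  refine eq_univ_of_forall fun x ↦ ?_
  obtain ⟨n, hn⟩ := exists_nat_gt (dist x z₀)
  exact ⟨_, mem_range_self n, mem_ball.2 (hn.trans (lt_add_one _))⟩

variable [OpensMeasurableSpace Z]

theorem countable_of_isSeparated (h : BallsPosFin μ) {ε : ℝ≥0} (hε : 0 < ε) {N : Set Z}
    (hN : IsSeparated ε N) : N.Countable := by
  have := h.sigmaFinite
  have hdisj : Pairwise (Disjoint on fun d : N ↦ ball (d : Z) (ε / 2)) := by
    intro d₁ d₂ hne
    have hlt : (ε : ℝ) < dist (d₁ : Z) d₂ := by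
      have : (ε : ℝ≥0∞) < edist (d₁ : Z) d₂ := hN d₁.2 d₂.2 (Subtype.coe_ne_coe.2 hne)
      rw [edist_nndist, ENNReal.coe_lt_coe] at this
      exact_mod_cast this
    exact ball_disjoint_ball (by linarith)
  have hpos : {d : N | 0 < μ (ball (d : Z) (ε / 2))} = univ :=
    eq_univ_of_forall fun d ↦ (h d _ (half_pos (NNReal.coe_pos.2 hε))).1
  have hcount :=
    Measure.countable_meas_pos_of_disjoint_iUnion (μ := μ) (fun _ ↦ measurableSet_ball) hdisj
  rw [hpos, countable_univ_iff] at hcount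
  exact countable_coe_iff.1 hcount

theorem secondCountableTopology (h : BallsPosFin μ) : SecondCountableTopology Z := by
  refine secondCountable_of_almost_dense_set fun ε hε ↦ ?_
  lift ε to ℝ≥0 using hε.le
  obtain ⟨N, hN⟩ := exists_maximal_isSeparated (ε : ℝ≥0∞) (univ : Set Z)
  refine ⟨N, h.countable_of_isSeparated (NNReal.coe_pos.1 hε) hN.1.2, fun x ↦ ?_⟩
  obtain ⟨y, hy, hxy⟩ := IsCover.of_maximal_isSeparated hN (mem_univ x)
  refine ⟨y, hy, ?_⟩
  change edist x y ≤ ε at hxy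
  rw [edist_nndist, ENNReal.coe_le_coe] at hxy
  exact_mod_cast hxy

end BallsPosFin

theorem ae_mem_support_restrict_of_mem {X : Type*} [TopologicalSpace X] [MeasurableSpace X]
    [HereditarilyLindelofSpace X] [OpensMeasurableSpace X] (μ : Measure X) (s : Set X) :
    ∀ᵐ x ∂μ, x ∈ s → x ∈ (μ.restrict s).support := by
  have hnull := Measure.measure_compl_support (μ := μ.restrict s)
  rw [Measure.restrict_apply Measure.isOpen_compl_support.measurableSet] at hnull
  refine measure_mono_null (fun x hx ↦ ?_) hnull
  obtain ⟨hxs, hx_supp⟩ := Classical.not_imp.1 hx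
  exact ⟨hx_supp, hxs⟩

theorem ae_forall_measure_ball_inter_superlevel_pos {X : Type*} [PseudoMetricSpace X]
    [MeasurableSpace X] [OpensMeasurableSpace X] [HereditarilyLindelofSpace X]
    (μ : Measure X) (u : X → ℝ) :
    ∀ᵐ x ∂μ, ∀ ε > 0, ∀ r > 0, 0 < μ (ball x r ∩ {z | u x - ε < u z}) := by
  filter_upwards [ae_all_iff.2 fun q : ℚ ↦ ae_mem_support_restrict_of_mem μ {z | (q : ℝ) < u z}]
    with x hx ε hε r hr
  obtain ⟨q, hq₁, hq₂⟩ := exists_rat_btwn (sub_lt_self (u x) hε)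
  have hpos := (Measure.mem_support_iff_forall x).1 (hx q hq₂) _ (ball_mem_nhds x hr)
  rw [Measure.restrict_apply measurableSet_ball] at hpos
  exact hpos.trans_le (measure_mono (inter_subset_inter_right _ fun z hz ↦ hq₁.trans hz))

theorem ae_forall_measure_ball_inter_sublevel_pos {X : Type*} [PseudoMetricSpace X]
    [MeasurableSpace X] [OpensMeasurableSpace X] [HereditarilyLindelofSpace X]
    (μ : Measure X) (u : X → ℝ) :
    ∀ᵐ x ∂μ, ∀ ε > 0, ∀ r > 0, 0 < μ (ball x r ∩ {z | u z < u x + ε}) := by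
  filter_upwards [ae_forall_measure_ball_inter_superlevel_pos μ (-u)] with x hx ε hε r hr
  refine (hx ε hε r hr).trans_le (measure_mono (inter_subset_inter_right _ fun z hz ↦ ?_))
  have hz' : -u x - ε < -u z := hz
  show u z < u x + ε
  linarith

namespace Curve

theorem integ_mono {X : Type*} [MetricSpace X] (γ : Curve X) {f g : X → ℝ≥0∞}
    (hfg : f ≤ g) : γ.integ f ≤ γ.integ g :=
  lintegral_mono fun _ ↦ hfg _

theorem aemeasurable_toFun [BorelSpace Z] (γ : Curve Z) :
    AEMeasurable γ.toFun (volume.restrict (Icc 0 γ.len)) :=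
  γ.lip.continuousOn.aemeasurable measurableSet_Icc

/-- The hypothesis says that `γ` spends almost no length where `ρ > M`. -/
theorem integ_le_mul_len [BorelSpace Z] (γ : Curve Z) {ρ : Z → ℝ≥0∞}
    (hρ : Measurable ρ) (M : ℝ≥0∞)
    (h : γ.integ ({z | M < ρ z}.indicator fun _ ↦ ∞) ≠ ∞) :
    γ.integ ρ ≤ M * ENNReal.ofReal γ.len := by
  have hmeas : Measurable ({z | M < ρ z}.indicator fun _ ↦ (∞ : ℝ≥0∞)) :=
    measurable_const.indicator (measurableSet_lt measurable_const hρ)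
  have hae := ae_lt_top' (hmeas.comp_aemeasurable γ.aemeasurable_toFun) h
  calc γ.integ ρ ≤ ∫⁻ _ in Icc 0 γ.len, M := by
        refine lintegral_mono_ae (hae.mono fun s hs ↦ not_lt.1 fun hlt ↦ ?_)
        simp [indicator_of_mem (show γ.toFun s ∈ {z | M < ρ z} from hlt)] at hs
    _ = M * ENNReal.ofReal γ.len := by
        rw [setLIntegral_const, Real.volume_Icc, sub_zero]

end Curve

section Negligible

variable {μ : Measure Z} {Γ₁ Γ₂ : Set (Curve Z)}

theorem InfNegligible.mono (h : InfNegligible μ Γ₂) (hΓ : Γ₁ ⊆ Γ₂) : InfNegligible μ Γ₁ :=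
  let ⟨g, hg, hg0, hgΓ⟩ := h
  ⟨g, hg, hg0, fun γ hγ ↦ hgΓ γ (hΓ hγ)⟩

theorem InfNegligible.union (h₁ : InfNegligible μ Γ₁) (h₂ : InfNegligible μ Γ₂) :
    InfNegligible μ (Γ₁ ∪ Γ₂) := by
  obtain ⟨g₁, hg₁, hg₁0, hg₁Γ⟩ := h₁
  obtain ⟨g₂, hg₂, hg₂0, hg₂Γ⟩ := h₂
  refine ⟨g₁ + g₂, hg₁.add hg₂, ?_, ?_⟩
  · filter_upwards [hg₁0, hg₂0] with z h₁ h₂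
    simp [h₁, h₂]
  · rintro γ (hγ | hγ)
    · exact top_le_iff.1 (hg₁Γ γ hγ ▸ γ.integ_mono le_self_add)
    · exact top_le_iff.1 (hg₂Γ γ hγ ▸ γ.integ_mono le_add_self)

theorem infNegligible_essSup_mul_len_lt_integ [BorelSpace Z] {ρ : Z → ℝ≥0∞}
    (hρ : Measurable ρ) :
    InfNegligible μ {γ : Curve Z | essSup ρ μ * ENNReal.ofReal γ.len < γ.integ ρ} := by
  refine ⟨{z | essSup ρ μ < ρ z}.indicator fun _ ↦ (∞ : ℝ≥0∞),
    measurable_const.indicator (measurableSet_lt measurable_const hρ), ?_, ?_⟩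
  · filter_upwards [ENNReal.ae_le_essSup (μ := μ) ρ] with z hz
    simp [hz.not_gt]
  · intro γ hγ
    by_contra hne
    exact (γ.integ_le_mul_len hρ _ hne).not_gt hγ

end Negligible

namespace ThickQC

variable [BorelSpace Z] {μ : Measure Z} {C : ℝ} {R : ℝ≥0∞} {u : Z → ℝ} {ρ : Z → ℝ≥0∞}

theorem exists_abs_sub_le (h : ThickQC μ C R) (hC : 0 ≤ C) (hρ : IsInfWeakUpperGrad μ u ρ)
    (hρb : essSup ρ μ ≠ ∞) {x₀ : Z} {E F : Set Z} (hEm : MeasurableSet E)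
    (hFm : MeasurableSet F) (hER : E ⊆ {z | edist z x₀ < R}) (hFR : F ⊆ {z | edist z x₀ < R})
    (hE : 0 < μ E) (hF : 0 < μ F) :
    ∃ a ∈ E, ∃ b ∈ F, |u a - u b| ≤ C * (essSup ρ μ).toReal * dist a b := by
  obtain ⟨hρm, Γ₀, hΓ₀, hgrad⟩ := hρ
  have hbad := hΓ₀.union (infNegligible_essSup_mul_len_lt_integ (μ := μ) hρm)
  obtain ⟨γ, ⟨ha, hb, hlen⟩, hγ⟩ :=
    not_subset.1 fun hsub ↦ h x₀ E F hEm hFm hER hFR hE hF (hbad.mono hsub)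
  simp only [mem_union, mem_ofPred_eq, not_or, not_lt] at hγ
  refine ⟨γ.start, ha, γ.finish, hb, ?_⟩
  have hfin : essSup ρ μ * ENNReal.ofReal (C * dist γ.start γ.finish) ≠ ∞ :=
    ENNReal.mul_ne_top hρb ENNReal.ofReal_ne_top
  have hbound := calc
    ENNReal.ofReal |u γ.start - u γ.finish| ≤ γ.integ ρ := hgrad γ hγ.1
    _ ≤ essSup ρ μ * ENNReal.ofReal γ.len := hγ.2
    _ ≤ essSup ρ μ * ENNReal.ofReal (C * dist γ.start γ.finish) := by gcongr
  rw [ENNReal.ofReal_le_iff_le_toReal hfin, ENNReal.toReal_mul,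
    ENNReal.toReal_ofReal (by positivity)] at hbound
  linarith

theorem sub_le_of_forall_measure_pos (h : ThickQC μ C R) (hC : 0 ≤ C) (hu : Measurable u)
    (hρ : IsInfWeakUpperGrad μ u ρ) (hρb : essSup ρ μ ≠ ∞) {x y : Z}
    (hx : ∀ ε > 0, ∀ r > 0, 0 < μ (ball x r ∩ {z | u x - ε < u z}))
    (hy : ∀ ε > 0, ∀ r > 0, 0 < μ (ball y r ∩ {z | u z < u y + ε}))
    (hxy : edist y x < R) :
    u x - u y ≤ C * (essSup ρ μ).toReal * dist x y := by
  set L := C * (essSup ρ μ).toReal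
  have hL : 0 ≤ L := mul_nonneg hC ENNReal.toReal_nonneg
  obtain ⟨r₁, hr₁, hx₁⟩ := Metric.isOpen_iff.1 (isOpen_eball (x := x) (ε := R)) x
    (mem_eball_self (zero_le.trans_lt hxy))
  obtain ⟨r₂, hr₂, hy₂⟩ := Metric.isOpen_iff.1 (isOpen_eball (x := x) (ε := R)) y hxy
  have hev : ∀ᶠ r in 𝓝[>] (0 : ℝ), u x - u y ≤ L * (dist x y + 2 * r) + 2 * r := by
    filter_upwards [Ioo_mem_nhdsGT (lt_min hr₁ hr₂)] with r ⟨hr, hrmin⟩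
    obtain ⟨a, ⟨hax, ha : u x - r < u a⟩, b, ⟨hby, hb : u b < u y + r⟩, hab⟩ :=
      h.exists_abs_sub_le hC hρ hρb
        (measurableSet_ball.inter (measurableSet_lt measurable_const hu))
        (measurableSet_ball.inter (measurableSet_lt hu measurable_const))
        ((inter_subset_left.trans (ball_subset_ball (hrmin.le.trans (min_le_left _ _)))).trans hx₁)
        ((inter_subset_left.trans (ball_subset_ball (hrmin.le.trans (min_le_right _ _)))).trans
          hy₂)
        (hx r hr r hr) (hy r hr r hr)
    have hdist : dist a b ≤ dist x y + 2 * r := by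
      have := dist_triangle4 a x y b
      linarith [mem_ball.1 hax, mem_ball'.1 hby]
    have : u a - u b ≤ L * (dist x y + 2 * r) :=
      (le_abs_self _).trans (hab.trans (mul_le_mul_of_nonneg_left hdist hL))
    linarith
  refine ge_of_tendsto ?_ hev
  have : Continuous fun r : ℝ ↦ L * (dist x y + 2 * r) + 2 * r := by fun_prop
  simpa using (this.tendsto 0).mono_left nhdsWithin_le_nhds

end ThickQC

theorem hajlasz_gradient_of_thickQC_general
    {Z : Type*} [MetricSpace Z] [MeasurableSpace Z] [BorelSpace Z] (μ : Measure Z)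
    (hballs : BallsPosFin μ)
    (C : ℝ) (hC : 1 ≤ C) (R : ℝ≥0∞)
    (h : ThickQC μ C R)
    (u : Z → ℝ) (hu : Measurable u)
    (ρ : Z → ℝ≥0∞) (hρ : IsInfWeakUpperGrad μ u ρ) (hρb : essSup ρ μ ≠ ∞) :
    ∃ N : Set Z, μ N = 0 ∧ ∀ x ∉ N, ∀ y ∉ N, edist x y < R →
      |u x - u y| ≤ 2 * C * (essSup ρ μ).toReal * dist x y := by
  have := hballs.secondCountableTopology
  have hgood := (ae_forall_measure_ball_inter_superlevel_pos μ u).and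
    (ae_forall_measure_ball_inter_sublevel_pos μ u)
  refine ⟨_, ae_iff.1 hgood, fun x hx y hy hxy ↦ ?_⟩
  simp only [mem_ofPred_eq, not_not] at hx hy
  have hC0 : 0 ≤ C := zero_le_one.trans hC
  have hle_xy := h.sub_le_of_forall_measure_pos hC0 hu hρ hρb hx.1 hy.2 (edist_comm x y ▸ hxy)
  have hle_yx := h.sub_le_of_forall_measure_pos hC0 hu hρ hρb hy.1 hx.2 hxy
  have hL : 0 ≤ C * (essSup ρ μ).toReal * dist x y := by positivity
  rw [dist_comm y x] at hle_yx
  rw [abs_sub_le_iff]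
  constructor <;> linarith

/-- In an infinitesimally doubling, ∞-thick (C,R)-quasiconvex metric
measure space, the constant `C·‖ρ‖_{L^∞}` is a Hajłasz gradient up to scale `R` of any
measurable function with ∞-weak upper gradient `ρ ∈ L^∞`:
`|u x − u y| ≤ 2C‖ρ‖_{L^∞} d(x,y)` for `x, y` outside a null set with `d(x,y) < R`. -/
theorem hajlasz_gradient_of_thickQC
    {Z : Type*} [MetricSpace Z] [MeasurableSpace Z] [BorelSpace Z] (μ : Measure Z)
    (hdb : InfinitesimallyDoubling μ)
    (hballs : BallsPosFin μ)
    (C : ℝ) (hC : 1 ≤ C) (R : ℝ≥0∞) (hR : 0 < R)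
    (h : ThickQC μ C R)
    (u : Z → ℝ) (hu : Measurable u)
    (ρ : Z → ℝ≥0∞) (hρ : IsInfWeakUpperGrad μ u ρ) (hρb : essSup ρ μ ≠ ∞) :
    ∃ N : Set Z, μ N = 0 ∧ ∀ x ∉ N, ∀ y ∉ N, edist x y < R →
      |u x - u y| ≤ 2 * C * (essSup ρ μ).toReal * dist x y :=
  hajlasz_gradient_of_thickQC_general μ hballs C hC R h u hu ρ hρ hρb
end

section
/- Let Z be a locally complete metric measure space with infinitesimally doubling reference measure, finite and positive on all balls, which is very ∞-thick (C,R)-quasiconvex. Then the essential distance d̂ satisfies d(x,y) ≤ d̂(x,y) ≤ C·d(x,y) for every pair x, y ∈ Z with d(x,y) < R. -/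
open MeasureTheory Metric Set ENNReal NNReal

variable {Z : Type*} [MetricSpace Z] [MeasurableSpace Z]

variable {Z : Type*} [MetricSpace Z] [MeasurableSpace Z]

/-- `d_Γ(x,y)`: infimum of lengths of curves from `x` to `y` avoiding `Γ`
(`∞` if there is none). -/
noncomputable def dGamma (Γ : Set (Curve Z)) (x y : Z) : ℝ≥0∞ :=
  ⨅ (γ : Curve Z) (_ : γ ∉ Γ ∧ γ.start = x ∧ γ.finish = y), ENNReal.ofReal γ.len

/-- The essential distance `d̂(x,y) = sup { d_Γ(x,y) : Γ ∞-negligible }`. -/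
noncomputable def essDist (μ : Measure Z) (x y : Z) : ℝ≥0∞ :=
  ⨆ (Γ : Set (Curve Z)) (_ : InfNegligible μ Γ), dGamma Γ x y

/-! The lower bound holds for every `d_Γ`, since a unit-speed curve is at least as long as the
distance between its endpoints. For the upper bound, very thickness says that the family of
`C`-quasiconvex curves from `x` to `y` is not `∞`-negligible, so it is not contained in a
negligible `Γ`; a member outside `Γ` bounds `d_Γ(x, y)` by `C · d(x, y)`. -/

theorem Curve.dist_start_finish_le_len {X : Type*} [MetricSpace X] (γ : Curve X) :
    dist γ.start γ.finish ≤ γ.len := by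
  have hmem : ∀ t ∈ ({0, γ.len} : Set ℝ), t ∈ Icc 0 γ.len := by
    simp [γ.len_nonneg]
  simpa [Curve.start, Curve.finish, Real.dist_eq, abs_of_nonneg γ.len_nonneg] using
    γ.lip.dist_le_mul 0 (hmem 0 (by simp)) γ.len (hmem γ.len (by simp))

theorem infNegligible_empty (μ : Measure Z) : InfNegligible μ (∅ : Set (Curve Z)) :=
  ⟨0, measurable_const, Filter.Eventually.of_forall fun _ => rfl, fun _ hγ => hγ.elim⟩

theorem InfNegligible.mono_s10 {μ : Measure Z} {Γ₁ Γ₂ : Set (Curve Z)} (h : InfNegligible μ Γ₂)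
    (hsub : Γ₁ ⊆ Γ₂) : InfNegligible μ Γ₁ :=
  let ⟨ρ, hρ, hρ0, hρΓ⟩ := h
  ⟨ρ, hρ, hρ0, fun γ hγ => hρΓ γ (hsub hγ)⟩

theorem ofReal_dist_le_dGamma {X : Type*} [MetricSpace X] (Γ : Set (Curve X)) (x y : X) :
    ENNReal.ofReal (dist x y) ≤ dGamma Γ x y :=
  le_iInf₂ fun γ ⟨_, hx, hy⟩ => by
    subst hx hy
    exact ENNReal.ofReal_le_ofReal γ.dist_start_finish_le_len

theorem dGamma_le_len {X : Type*} [MetricSpace X] {Γ : Set (Curve X)} {γ : Curve X}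
    (hγ : γ ∉ Γ) : dGamma Γ γ.start γ.finish ≤ ENNReal.ofReal γ.len :=
  iInf₂_le γ ⟨hγ, rfl, rfl⟩

theorem ofReal_dist_le_essDist (μ : Measure Z) (x y : Z) :
    ENNReal.ofReal (dist x y) ≤ essDist μ x y :=
  (ofReal_dist_le_dGamma ∅ x y).trans <|
    le_iSup₂ (f := fun Γ (_ : InfNegligible μ Γ) => dGamma Γ x y) ∅ (infNegligible_empty μ)

theorem essDist_le_of_not_infNegligible_qcFam {μ : Measure Z} {C : ℝ} {x y : Z}
    (hqc : ¬ InfNegligible μ (qcFam C x y)) :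
    essDist μ x y ≤ ENNReal.ofReal (C * dist x y) := by
  refine iSup₂_le fun Γ hΓ => ?_
  obtain ⟨γ, ⟨rfl, rfl, hlen⟩, hγΓ⟩ : ∃ γ ∈ qcFam C x y, γ ∉ Γ :=
    not_subset.mp fun hsub => hqc (hΓ.mono_s10 hsub)
  exact (dGamma_le_len hγΓ).trans (ENNReal.ofReal_le_ofReal hlen)

theorem VeryThick.not_infNegligible_qcFam {μ : Measure Z} {C : ℝ} {R : ℝ≥0∞}
    (h : VeryThick μ C R) (hR : 0 < R) {x y : Z} (hxy : edist x y < R) :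
    ¬ InfNegligible μ (qcFam C x y) :=
  h x x y (by simpa using hR) (by rwa [edist_comm])

theorem essDist_comparable_general
    (μ : Measure Z)
    (C : ℝ) (R : ℝ≥0∞) (hR : 0 < R)
    (h : VeryThick μ C R) :
    ∀ x y : Z, edist x y < R →
      ENNReal.ofReal (dist x y) ≤ essDist μ x y ∧
      essDist μ x y ≤ ENNReal.ofReal (C * dist x y) := fun _ _ hxy =>
  ⟨ofReal_dist_le_essDist μ _ _,
    essDist_le_of_not_infNegligible_qcFam (h.not_infNegligible_qcFam hR hxy)⟩

/-- In a locally complete, infinitesimally doubling (balls positive and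
finite), very ∞-thick (C,R)-quasiconvex metric measure space, the essential distance
satisfies `d(x,y) ≤ d̂(x,y) ≤ C·d(x,y)` whenever `d(x,y) < R`. -/
theorem essDist_comparable
    [BorelSpace Z] (μ : Measure Z)
    (hloc : LocallyComplete Z)
    (hdb : InfinitesimallyDoubling μ)
    (hballs : BallsPosFin μ)
    (C : ℝ) (hC : 1 ≤ C) (R : ℝ≥0∞) (hR : 0 < R)
    (h : VeryThick μ C R) :
    ∀ x y : Z, edist x y < R →
      ENNReal.ofReal (dist x y) ≤ essDist μ x y ∧
      essDist μ x y ≤ ENNReal.ofReal (C * dist x y) :=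
  essDist_comparable_general μ C R hR h
end

section
/- Let Z be a metric measure space that is ∞-thick (C,R)-quasiconvex and infinitesimally doubling, and let C′ > C and r ∈ (0,R]. Then Z supports a weak (1,∞)-Poincaré inequality up to scale r with dilation constant λ = C′·r/r and constant 2C: for every u ∈ W^{1,∞}(Z) with minimal ∞-weak upper gradient ρ_u and every ball B(x,r′) with r′ ≤ r, ⨍_{B(x,r′)} |u − u_{B(x,r′)}| dμ ≤ 2C · diam(B(x,r′)) · ‖ρ_u‖_{L^∞(B(x, C′r′))}. -/
open MeasureTheory Metric Set ENNReal NNReal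

variable {Z : Type*} [MetricSpace Z] [MeasurableSpace Z]

/-- ∞-thick (C,R)-quasiconvexity with a real scale `R`. -/
def ThickQCr {Z : Type*} [MetricSpace Z] [MeasurableSpace Z]
    (μ : Measure Z) (C R : ℝ) : Prop :=
  ∀ x₀ : Z, ∀ E F : Set Z, MeasurableSet E → MeasurableSet F →
    E ⊆ Metric.ball x₀ R → F ⊆ Metric.ball x₀ R →
    0 < μ E → 0 < μ F → ¬ InfNegligible μ (thickFam C E F)

/-!
Let `M` bound `ρ` a.e. on `B(x, C'r')`. For sets `E ⊆ B = B(x, r')` and `F ⊆ B(x, εr')` of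
positive measure, `∞`-thickness yields a `C`-quasiconvex curve from `E` to `F` that avoids the
null set `{ρ > M}` and satisfies the upper gradient inequality; for `ε` small it stays in
`B(x, C'r')`, so `|u z - u w| ≤ C diam B M` for its endpoints. Comparing a super-level and a
sub-level set of `u` in `B` with the two halves of `B(x, εr')` cut at the middle level shows that
the essential oscillation of `u` on `B` is at most `2 C diam B M`, which bounds the mean
oscillation.
-/

theorem Curve.two_mul_dist_le {Z : Type*} [MetricSpace Z] (γ : Curve Z) {s : ℝ}
    (hs : s ∈ Icc 0 γ.len) (y : Z) :
    2 * dist (γ.toFun s) y ≤ γ.len + dist γ.start y + dist γ.finish y := by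
  have h₀ : (0 : ℝ) ∈ Icc 0 γ.len := ⟨le_rfl, γ.len_nonneg⟩
  have hℓ : γ.len ∈ Icc 0 γ.len := ⟨γ.len_nonneg, le_rfl⟩
  have hstart : dist (γ.toFun s) γ.start ≤ s := by
    simpa [Curve.start, Real.dist_eq, abs_of_nonneg hs.1] using γ.lip.dist_le_mul s hs 0 h₀
  have hfinish : dist (γ.toFun s) γ.finish ≤ γ.len - s := by
    simpa [Curve.finish, Real.dist_eq, abs_of_nonpos (sub_nonpos.2 hs.2)] using
      γ.lip.dist_le_mul s hs γ.len hℓ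
  linarith [dist_triangle (γ.toFun s) γ.start y, dist_triangle (γ.toFun s) γ.finish y]

theorem two_mul_dist_lt_of_mem_thickFam {Z : Type*} [MetricSpace Z] {C r₁ r₂ : ℝ}
    (hC : 0 ≤ C) {E F : Set Z} {x : Z} (hE : E ⊆ ball x r₁) (hF : F ⊆ ball x r₂)
    {γ : Curve Z} (hγ : γ ∈ thickFam C E F) {s : ℝ} (hs : s ∈ Icc 0 γ.len) :
    2 * dist (γ.toFun s) x < (C + 1) * (r₁ + r₂) := by
  obtain ⟨hstart, hfinish, hlen⟩ := hγ
  have h₁ : dist γ.start x < r₁ := hE hstart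
  have h₂ : dist γ.finish x < r₂ := hF hfinish
  have hlen' : γ.len ≤ C * (dist γ.start x + dist γ.finish x) :=
    hlen.trans (mul_le_mul_of_nonneg_left (dist_triangle_right _ _ x) hC)
  nlinarith [γ.two_mul_dist_le hs x]

theorem Curve.integ_le_of_ae_le {Z : Type*} [MetricSpace Z] (γ : Curve Z) {ρ : Z → ℝ≥0∞}
    {M : ℝ≥0∞} (h : ∀ᵐ s ∂volume.restrict (Icc 0 γ.len), ρ (γ.toFun s) ≤ M) :
    γ.integ ρ ≤ M * ENNReal.ofReal γ.len := by
  calc γ.integ ρ ≤ ∫⁻ _ in Icc 0 γ.len, M := lintegral_mono_ae h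
    _ = M * ENNReal.ofReal γ.len := by rw [setLIntegral_const, Real.volume_Icc, sub_zero]

theorem Curve.integ_mono_s16 {Z : Type*} [MetricSpace Z] (γ : Curve Z) {ρ ρ' : Z → ℝ≥0∞}
    (h : ρ ≤ ρ') : γ.integ ρ ≤ γ.integ ρ' :=
  lintegral_mono fun _ => h _

section CurveFamilies

variable {μ : Measure Z}

theorem InfNegligible.mono_s16 {Γ Γ' : Set (Curve Z)} (h : InfNegligible μ Γ') (hΓ : Γ ⊆ Γ') :
    InfNegligible μ Γ := by
  obtain ⟨ρ, hρm, hρ0, hρΓ⟩ := h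
  exact ⟨ρ, hρm, hρ0, fun γ hγ => hρΓ γ (hΓ hγ)⟩

theorem InfNegligible.union_s16 {Γ Γ' : Set (Curve Z)} (h : InfNegligible μ Γ)
    (h' : InfNegligible μ Γ') : InfNegligible μ (Γ ∪ Γ') := by
  obtain ⟨ρ, hρm, hρ0, hρΓ⟩ := h
  obtain ⟨ρ', hρm', hρ0', hρΓ'⟩ := h'
  refine ⟨ρ + ρ', hρm.add hρm', ?_, ?_⟩
  · filter_upwards [hρ0, hρ0'] with z hz hz'
    simp [hz, hz']
  · rintro γ (hγ | hγ)
    · exact top_unique (hρΓ γ hγ ▸ γ.integ_mono_s16 le_self_add)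
    · exact top_unique (hρΓ' γ hγ ▸ γ.integ_mono_s16 le_add_self)

/-- Witnessed by `∞ · 𝟙_D`. -/
theorem infNegligible_setOf_frequently_mem [BorelSpace Z] {D : Set Z} (hD : MeasurableSet D)
    (hD0 : μ D = 0) :
    InfNegligible μ {γ : Curve Z | ∃ᵐ s ∂volume.restrict (Icc 0 γ.len), γ.toFun s ∈ D} := by
  refine ⟨D.indicator fun _ => ∞, measurable_const.indicator hD, ?_, fun γ hγ => ?_⟩
  · filter_upwards [measure_eq_zero_iff_ae_notMem.1 hD0] with z hz
    exact indicator_of_notMem hz _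
  · have hγm : AEMeasurable γ.toFun (volume.restrict (Icc 0 γ.len)) :=
      γ.lip.continuousOn.aemeasurable measurableSet_Icc
    refine lintegral_eq_top_of_measure_eq_top_ne_zero
      ((measurable_const.indicator hD).comp_aemeasurable hγm) ?_
    simpa [indicator_apply] using frequently_ae_iff.1 hγ

theorem ThickQCr.not_infNegligible {C R : ℝ} (h : ThickQCr μ C R) {x₀ : Z} {E F : Set Z}
    (hE : NullMeasurableSet E μ) (hF : NullMeasurableSet F μ)
    (hER : E ⊆ ball x₀ R) (hFR : F ⊆ ball x₀ R) (hE0 : 0 < μ E) (hF0 : 0 < μ F) :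
    ¬ InfNegligible μ (thickFam C E F) := by
  obtain ⟨E', hE'E, hE'm, hE'ae⟩ := hE.exists_measurable_subset_ae_eq
  obtain ⟨F', hF'F, hF'm, hF'ae⟩ := hF.exists_measurable_subset_ae_eq
  refine fun hneg => h x₀ E' F' hE'm hF'm (hE'E.trans hER) (hF'F.trans hFR)
    (measure_congr hE'ae ▸ hE0) (measure_congr hF'ae ▸ hF0) (hneg.mono_s16 ?_)
  rintro γ ⟨hstart, hfinish, hlen⟩
  exact ⟨hE'E hstart, hF'F hfinish, hlen⟩

/-- Since `U ∩ {ρ > M}` is null, all curves of `Γ(E, F; C)` outside a negligible family see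
`ρ ≤ M` at almost every time and satisfy the upper gradient inequality; thickness provides one. -/
theorem IsInfWeakUpperGrad.exists_abs_sub_le [BorelSpace Z] {u : Z → ℝ} {ρ : Z → ℝ≥0∞}
    (hρ : IsInfWeakUpperGrad μ u ρ) {C : ℝ} (hC : 0 ≤ C) {E F U : Set Z}
    (hEF : ¬ InfNegligible μ (thickFam C E F)) (hU : MeasurableSet U)
    (hγU : ∀ γ ∈ thickFam C E F, ∀ s ∈ Icc 0 γ.len, γ.toFun s ∈ U)
    (hM : essSup ρ (μ.restrict U) ≠ ∞) :
    ∃ z ∈ E, ∃ w ∈ F, |u z - u w| ≤ C * dist z w * (essSup ρ (μ.restrict U)).toReal := by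
  obtain ⟨hρm, Γ₀, hΓ₀, hup⟩ := hρ
  set M := essSup ρ (μ.restrict U)
  set D := U ∩ {z | M < ρ z}
  have hDm : MeasurableSet D := hU.inter (measurableSet_lt measurable_const hρm)
  have hD0 : μ D = 0 := by
    have : μ.restrict U {z | M < ρ z} = 0 := by
      simpa [not_le] using ae_iff.1 (ENNReal.ae_le_essSup (μ := μ.restrict U) ρ)
    rwa [Measure.restrict_apply' hU, inter_comm] at this
  obtain ⟨γ, hγ, hγΓ₀, hγD⟩ : ∃ γ ∈ thickFam C E F, γ ∉ Γ₀ ∧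
      ∀ᵐ s ∂volume.restrict (Icc 0 γ.len), γ.toFun s ∉ D := by
    by_contra! hsub
    exact hEF ((hΓ₀.union_s16 (infNegligible_setOf_frequently_mem hDm hD0)).mono_s16
      fun γ hγ => (em (γ ∈ Γ₀)).imp id fun h => hsub γ hγ h)
  have hρM : ∀ᵐ s ∂volume.restrict (Icc 0 γ.len), ρ (γ.toFun s) ≤ M := by
    filter_upwards [hγD, ae_restrict_mem measurableSet_Icc] with s hsD hs
    exact not_lt.1 fun hlt => hsD ⟨hγU γ hγ s hs, hlt⟩
  refine ⟨γ.start, hγ.1, γ.finish, hγ.2.1, ?_⟩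
  have hbound : ENNReal.ofReal |u γ.start - u γ.finish|
      ≤ M * ENNReal.ofReal (C * dist γ.start γ.finish) :=
    calc ENNReal.ofReal |u γ.start - u γ.finish| ≤ γ.integ ρ := hup γ hγΓ₀
      _ ≤ M * ENNReal.ofReal γ.len := γ.integ_le_of_ae_le hρM
      _ ≤ M * ENNReal.ofReal (C * dist γ.start γ.finish) := by gcongr; exact hγ.2.2
  rw [ENNReal.ofReal_le_iff_le_toReal (mul_ne_top hM ofReal_ne_top), toReal_mul,
    toReal_ofReal (by positivity)] at hbound
  linarith

theorem ThickQCr.exists_abs_sub_le_mul_diam [BorelSpace Z] {C R : ℝ} (h : ThickQCr μ C R)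
    (hC : 0 ≤ C) {u : Z → ℝ} {ρ : Z → ℝ≥0∞} (hρ : IsInfWeakUpperGrad μ u ρ) {x : Z}
    {r' ε C' : ℝ} (hr' : 0 ≤ r') (hr'R : r' ≤ R) (hε : ε ≤ 1)
    (hεC' : (C + 1) * (1 + ε) ≤ 2 * C') (hM : essSup ρ (μ.restrict (ball x (C' * r'))) ≠ ∞)
    {E F : Set Z} (hE : NullMeasurableSet E μ) (hF : NullMeasurableSet F μ)
    (hEB : E ⊆ ball x r') (hFS : F ⊆ ball x (ε * r')) (hE0 : 0 < μ E) (hF0 : 0 < μ F) :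
    ∃ z ∈ E, ∃ w ∈ F,
      |u z - u w| ≤ C * diam (ball x r') * (essSup ρ (μ.restrict (ball x (C' * r')))).toReal := by
  have hFB : F ⊆ ball x r' := hFS.trans (ball_subset_ball (mul_le_of_le_one_left hr' hε))
  have hBR : ball x r' ⊆ ball x R := ball_subset_ball hr'R
  have hγU : ∀ γ ∈ thickFam C E F, ∀ s ∈ Icc 0 γ.len, γ.toFun s ∈ ball x (C' * r') := by
    intro γ hγ s hs
    have := two_mul_dist_lt_of_mem_thickFam hC hEB hFS hγ hs
    rw [mem_ball]
    nlinarith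
  obtain ⟨z, hz, w, hw, hzw⟩ := hρ.exists_abs_sub_le hC
    (h.not_infNegligible hE hF (hEB.trans hBR) (hFB.trans hBR) hE0 hF0) measurableSet_ball
    hγU hM
  refine ⟨z, hz, w, hw, hzw.trans ?_⟩
  gcongr
  exact dist_le_diam_of_mem isBounded_ball (hEB hz) (hFB hw)

end CurveFamilies

section LevelSets

variable {α : Type*} [MeasurableSpace α]

/-- Splitting the small set `S` at the midpoint `m = (a + b) / 2` of the two levels: the half
of positive measure is close to one of the level sets, and each half costs `(a - b) / 2`. -/
theorem sub_le_two_mul_of_forall_exists_abs_sub_le {μ : Measure α} {f : α → ℝ}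
    (hf : AEMeasurable f μ) {B S : Set α} (hB : NullMeasurableSet B μ)
    (hS : NullMeasurableSet S μ) (hS0 : 0 < μ S) {L : ℝ}
    (hclose : ∀ E F : Set α, NullMeasurableSet E μ → NullMeasurableSet F μ → E ⊆ B → F ⊆ S →
      0 < μ E → 0 < μ F → ∃ z ∈ E, ∃ w ∈ F, |f z - f w| ≤ L)
    {a b : ℝ} (ha : 0 < μ ({z | a < f z} ∩ B)) (hb : 0 < μ ({z | f z < b} ∩ B)) :
    a - b ≤ 2 * L := by
  set m := (a + b) / 2 with hm
  have hsplit : μ S ≤ μ (S ∩ {z | m < f z}) + μ (S ∩ {z | f z ≤ m}) := by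
    refine (measure_mono fun z hz => ?_).trans (measure_union_le _ _)
    by_cases h : m < f z
    exacts [Or.inl ⟨hz, h⟩, Or.inr ⟨hz, not_lt.1 h⟩]
  by_cases hup : 0 < μ (S ∩ {z | m < f z})
  · obtain ⟨z, ⟨hz, -⟩, w, ⟨-, hw⟩, hzw⟩ := hclose _ _
      ((nullMeasurableSet_lt hf aemeasurable_const).inter hB)
      (hS.inter (nullMeasurableSet_lt aemeasurable_const hf))
      inter_subset_right inter_subset_left hb hup
    linarith [neg_abs_le (f z - f w), show f z < b from hz, show m < f w from hw]
  · have hdown : 0 < μ (S ∩ {z | f z ≤ m}) := by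
      rw [not_lt, nonpos_iff_eq_zero] at hup
      rw [hup, zero_add] at hsplit
      exact hS0.trans_le hsplit
    obtain ⟨z, ⟨hz, -⟩, w, ⟨-, hw⟩, hzw⟩ := hclose _ _
      ((nullMeasurableSet_lt aemeasurable_const hf).inter hB)
      (hS.inter (nullMeasurableSet_le hf aemeasurable_const))
      inter_subset_right inter_subset_left ha hdown
    linarith [le_abs_self (f z - f w), show a < f z from hz, show f w ≤ m from hw]

/-- Restricting to rational levels makes the exceptional sets countable unions of null sets. -/
theorem ae_ae_abs_sub_le_of_levelSets {ν : Measure α} {f : α → ℝ} {K : ℝ}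
    (H : ∀ a b : ℝ, 0 < ν {z | a < f z} → 0 < ν {z | f z < b} → a - b ≤ K) :
    ∀ᵐ z ∂ν, ∀ᵐ y ∂ν, |f z - f y| ≤ K := by
  have hup : ∀ᵐ z ∂ν, ∀ q : ℚ, (q : ℝ) < f z → 0 < ν {y | q < f y} := by
    refine ae_all_iff.2 fun q => ?_
    rcases eq_zero_or_pos (ν {y | q < f y}) with h | h
    · filter_upwards [measure_eq_zero_iff_ae_notMem.1 h] with z hz hq using absurd hq hz
    · exact Filter.Eventually.of_forall fun _ _ => h
  have hdown : ∀ᵐ z ∂ν, ∀ q : ℚ, f z < q → 0 < ν {y | f y < q} := by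
    refine ae_all_iff.2 fun q => ?_
    rcases eq_zero_or_pos (ν {y | f y < q}) with h | h
    · filter_upwards [measure_eq_zero_iff_ae_notMem.1 h] with z hz hq using absurd hq hz
    · exact Filter.Eventually.of_forall fun _ _ => h
  have hgap : ∀ z y, (∀ q : ℚ, (q : ℝ) < f z → 0 < ν {x | q < f x}) →
      (∀ q : ℚ, f y < q → 0 < ν {x | f x < q}) → f z - f y ≤ K := by
    intro z y hz hy
    by_contra! hlt
    obtain ⟨q, hq, hqz⟩ := exists_rat_btwn (show f y + K < f z by linarith)
    obtain ⟨q', hyq', hq'⟩ := exists_rat_btwn (show f y < q - K by linarith)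
    linarith [H q q' (hz q hqz) (hy q' hyq')]
  filter_upwards [hup, hdown] with z hz₁ hz₂
  filter_upwards [hup, hdown] with y hy₁ hy₂
  exact abs_sub_le_iff.2 ⟨hgap z y hz₁ hy₂, hgap y z hy₁ hz₂⟩

theorem average_norm_sub_average_le {E : Type*} [NormedAddCommGroup E] [NormedSpace ℝ E]
    [CompleteSpace E] {ν : Measure α} [IsFiniteMeasure ν] [NeZero ν] {f : α → E}
    (hf : Integrable f ν) {K : ℝ} (h : ∀ᵐ z ∂ν, ∀ᵐ y ∂ν, ‖f z - f y‖ ≤ K) :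
    ⨍ z, ‖f z - ⨍ y, f y ∂ν‖ ∂ν ≤ K := by
  have hpt : ∀ᵐ z ∂ν, ‖f z - ⨍ y, f y ∂ν‖ ≤ K := by
    filter_upwards [h] with z hz
    have hmem : ⨍ y, f y ∂ν ∈ closedBall (f z) K :=
      (convex_closedBall _ _).average_mem isClosed_closedBall
        (by filter_upwards [hz] with y hy; rwa [mem_closedBall, dist_comm, dist_eq_norm]) hf
    rwa [mem_closedBall, dist_comm, dist_eq_norm] at hmem
  obtain ⟨z, hz, hle⟩ := exists_notMem_null_average_le (NeZero.ne ν)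
    (hf.sub (integrable_const _)).norm (ae_iff.1 hpt)
  exact hle.trans (not_not.1 hz)

end LevelSets

theorem exists_pos_le_one_and_mul_one_add_le {C C' : ℝ} (hC : 0 ≤ C) (hCC' : C + 1 < 2 * C') :
    ∃ ε : ℝ, 0 < ε ∧ ε ≤ 1 ∧ (C + 1) * (1 + ε) ≤ 2 * C' := by
  refine ⟨min 1 ((2 * C' - (C + 1)) / (C + 1)), lt_min one_pos (by apply div_pos <;> linarith),
    min_le_left _ _, ?_⟩
  have := mul_le_mul_of_nonneg_left (min_le_right 1 ((2 * C' - (C + 1)) / (C + 1)))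
    (by linarith : (0 : ℝ) ≤ C + 1)
  rw [mul_div_cancel₀ _ (by linarith)] at this
  linarith

theorem weak_poincare_of_thickQC_general
    {Z : Type*} [MetricSpace Z] [MeasurableSpace Z] [BorelSpace Z] (μ : Measure Z)
    (hballs : BallsPosFin μ)
    (C : ℝ) (hC : 1 ≤ C) (R : ℝ)
    (h : ThickQCr μ C R)
    (C' : ℝ) (hC' : C < C') (r : ℝ) (hrR : r ≤ R)
    (u : Z → ℝ) (hu : MemLp u ⊤ μ)
    (ρ : Z → ℝ≥0∞) (hρ : IsInfWeakUpperGrad μ u ρ) (hρb : essSup ρ μ ≠ ∞) :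
    ∀ (x : Z) (r' : ℝ), 0 < r' → r' ≤ r →
      ⨍ z in Metric.ball x r', |u z - ⨍ w in Metric.ball x r', u w ∂μ| ∂μ ≤
        2 * C * Metric.diam (Metric.ball x r') *
          (essSup ρ (μ.restrict (Metric.ball x (C' * r')))).toReal := by
  intro x r' hr' hr'r
  obtain ⟨ε, hε, hε1, hεC'⟩ :=
    exists_pos_le_one_and_mul_one_add_le (C := C) (C' := C') (by linarith) (by linarith)
  have hM : essSup ρ (μ.restrict (ball x (C' * r'))) ≠ ∞ :=
    ne_top_of_le_ne_top hρb (essSup_mono_measure Measure.restrict_le_self.absolutelyContinuous)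
  have hlevel : ∀ a b : ℝ, 0 < μ.restrict (ball x r') {z | a < u z} →
      0 < μ.restrict (ball x r') {z | u z < b} →
      a - b ≤ 2 * C * diam (ball x r') * (essSup ρ (μ.restrict (ball x (C' * r')))).toReal := by
    intro a b ha hb
    rw [Measure.restrict_apply' measurableSet_ball] at ha hb
    have := sub_le_two_mul_of_forall_exists_abs_sub_le hu.aestronglyMeasurable.aemeasurable
      measurableSet_ball.nullMeasurableSet measurableSet_ball.nullMeasurableSet
      (hballs x (ε * r') (by positivity)).1
      (fun _ _ hE hF hEB hFS hE0 hF0 => h.exists_abs_sub_le_mul_diam (by linarith) hρ hr'.le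
        (hr'r.trans hrR) hε1 hεC' hM hE hF hEB hFS hE0 hF0) ha hb
    linarith
  have : IsFiniteMeasure (μ.restrict (ball x r')) :=
    isFiniteMeasure_restrict.2 (hballs x r' hr').2.ne
  have : NeZero (μ.restrict (ball x r')) :=
    ⟨fun h0 => (hballs x r' hr').1.ne' (Measure.restrict_eq_zero.1 h0)⟩
  simpa only [Real.norm_eq_abs] using average_norm_sub_average_le
    ((hu.restrict _).integrable le_top) (ae_ae_abs_sub_le_of_levelSets hlevel)

/-- An infinitesimally doubling, ∞-thick (C,R)-quasiconvex metric
measure space supports a weak (1,∞)-Poincaré inequality up to scale `r ∈ (0,R]` with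
dilation `C'` and constant `2C`: for every `u ∈ W^{1,∞}(Z)` with ∞-weak upper
gradient `ρ` and every ball of radius `r' ≤ r`,
`⨍_B |u − u_B| dμ ≤ 2C · diam B · ‖ρ‖_{L^∞(C'B)}`. -/
theorem weak_poincare_of_thickQC
    {Z : Type*} [MetricSpace Z] [MeasurableSpace Z] [BorelSpace Z] (μ : Measure Z)
    (hdb : InfinitesimallyDoubling μ)
    (hballs : BallsPosFin μ)
    (C : ℝ) (hC : 1 ≤ C) (R : ℝ) (hR : 0 < R)
    (h : ThickQCr μ C R)
    (C' : ℝ) (hC' : C < C') (r : ℝ) (hr : 0 < r) (hrR : r ≤ R)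
    (u : Z → ℝ) (hu : MemLp u ⊤ μ)
    (ρ : Z → ℝ≥0∞) (hρ : IsInfWeakUpperGrad μ u ρ) (hρb : essSup ρ μ ≠ ∞) :
    ∀ (x : Z) (r' : ℝ), 0 < r' → r' ≤ r →
      ⨍ z in Metric.ball x r', |u z - ⨍ w in Metric.ball x r', u w ∂μ| ∂μ ≤
        2 * C * Metric.diam (Metric.ball x r') *
          (essSup ρ (μ.restrict (Metric.ball x (C' * r')))).toReal :=
  weak_poincare_of_thickQC_general μ hballs C hC R h C' hC' r hrR u hu ρ hρ hρb
end
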